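/- arXiv:1601.05479 — 9 statements merged into one kernel-verified Lean document; each statement's English description precedes it below -/
import Mathlib

section
/- Let 𝕂 be an algebraically closed field of characteristic zero equipped with a rank-one valuation val : 𝕂* → ℝ such that val(m) = 0 for every nonzero integer m. Let g = ∑_{i=0}^n d_i x^i ∈ 𝕂[x] with d_0 ≠ 0 and d_n ≠ 0. Let a ∈ 𝕂 be a root of g of multiplicity m ≥ 1, and set v = val(a). Then m is strictly smaller than the cardinality of the set S(v) = {i ∈ {0,…,n} : d_i ≠ 0 and val(d_i) + i·v = min{val(d_k) + k·v : 0 ≤ k ≤ n, d_k ≠ 0}}. -/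
open Polynomial

/-!
Let `μ` be the minimum of `val (d_k) + k v`, attained at some `s₁ ∈ S(v)`. The Euler operator
`Θ = X d/dX` acts on monomials by `Θ x^k = k x^k`, and `Θ^j g` still vanishes at `a` for `j < m`.
Hence `∑ Q(k) d_k a^k = 0` for every polynomial `Q` of degree `< m`. If `|S(v)| ≤ m`, take
`Q = ∏_{s ∈ S(v), s ≠ s₁} (X - s)`: it kills the other minimal terms, while its values at the
remaining indices are nonzero integers, hence of valuation `0`. So the term `k = s₁` is the only
one of valuation `μ` and the sum cannot vanish.
-/

namespace Polynomial

section EulerOperator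

variable {R : Type*} [CommRing R]

theorem coeff_X_mul_derivative (p : R[X]) (k : ℕ) :
    (X * derivative p).coeff k = k * p.coeff k := by
  cases k with
  | zero => simp [mul_coeff_zero]
  | succ k => rw [coeff_X_mul, coeff_derivative]; push_cast; ring

theorem coeff_iterate_X_mul_derivative (p : R[X]) (j k : ℕ) :
    ((fun q => X * derivative q)^[j] p).coeff k = (k : R) ^ j * p.coeff k := by
  induction j with
  | zero => simp
  | succ j ih => rw [Function.iterate_succ_apply', coeff_X_mul_derivative, ih, pow_succ]; ring

theorem pow_sub_dvd_iterate_X_mul_derivative_of_pow_dvd {p q : R[X]} {n : ℕ} (j : ℕ)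
    (dvd : q ^ n ∣ p) : q ^ (n - j) ∣ (fun r => X * derivative r)^[j] p := by
  induction j with
  | zero => simpa
  | succ j ih =>
    rw [Nat.sub_succ, Function.iterate_succ_apply']
    exact (pow_sub_one_dvd_derivative_of_pow_dvd ih).mul_left X

theorem sum_natCast_pow_mul_coeff_mul_pow_eq_zero {p : R[X]} {a : R} {j : ℕ}
    (hj : j < p.rootMultiplicity a) :
    ∑ k ∈ Finset.range (p.natDegree + 1), (k : R) ^ j * p.coeff k * a ^ k = 0 := by
  set θp := (fun r => X * derivative r)^[j] p
  have hroot : θp.IsRoot a := dvd_iff_isRoot.mp <|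
    (dvd_pow_self _ (Nat.sub_ne_zero_of_lt hj)).trans
      (pow_sub_dvd_iterate_X_mul_derivative_of_pow_dvd j (pow_rootMultiplicity_dvd p a))
  have hdeg : θp.natDegree < p.natDegree + 1 := Nat.lt_succ_of_le <|
    natDegree_le_iff_coeff_eq_zero.mpr fun k hk => by
      rw [coeff_iterate_X_mul_derivative, coeff_eq_zero_of_natDegree_lt hk, mul_zero]
  rw [← hroot.eq_zero, eval_eq_sum_range' hdeg]
  simp only [θp, coeff_iterate_X_mul_derivative]

theorem sum_eval_mul_coeff_mul_pow_eq_zero {p Q : R[X]} {a : R}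
    (hQ : Q.natDegree < p.rootMultiplicity a) :
    ∑ k ∈ Finset.range (p.natDegree + 1), Q.eval (k : R) * p.coeff k * a ^ k = 0 := by
  simp_rw [eval_eq_sum_range, Finset.sum_mul]
  rw [Finset.sum_comm]
  refine Finset.sum_eq_zero fun j hj => ?_
  have hjm : j < p.rootMultiplicity a := (Finset.mem_range_succ_iff.mp hj).trans_lt hQ
  have hmoment := sum_natCast_pow_mul_coeff_mul_pow_eq_zero hjm
  simp only [mul_assoc] at hmoment ⊢
  rw [← Finset.mul_sum, hmoment, mul_zero]

end EulerOperator

end Polynomial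

namespace AddValuation

variable {K Γ₀ : Type*} [LinearOrderedAddCommMonoidWithTop Γ₀]

theorem map_sum_eq_of_lt [Ring K] (v : AddValuation K Γ₀) {ι : Type*} [DecidableEq ι]
    {s : Finset ι} {f : ι → K} {j : ι} (hj : j ∈ s) (hf : ∀ i ∈ s \ {j}, v (f j) < v (f i)) :
    v (∑ i ∈ s, f i) = v (f j) :=
  Valuation.map_sum_eq_of_lt v hj hf

theorem map_prod_natCast_sub_eq_zero [CommRing K] (v : AddValuation K Γ₀)
    (hv : ∀ m : ℤ, m ≠ 0 → v m = 0) {T : Finset ℕ} {k : ℕ} (hk : k ∉ T) :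
    v (∏ s ∈ T, ((k : K) - s)) = 0 := by
  have hprod : ∏ s ∈ T, ((k : K) - s) = ((∏ s ∈ T, ((k : ℤ) - s) : ℤ) : K) := by push_cast; rfl
  rw [hprod, hv]
  exact Finset.prod_ne_zero_iff.mpr fun s hs => sub_ne_zero.mpr fun h =>
    hk (Nat.cast_injective h ▸ hs)

variable [Field K]

/-- The set `S(v)` of indices at which the term `d_i a^i` of `g(a)` has minimal valuation. -/
def termMinimizers (v : AddValuation K Γ₀) (g : K[X]) (a : K) : Finset ℕ :=
  {i ∈ g.support | ∀ k ∈ g.support, v (g.coeff i) + i • v a ≤ v (g.coeff k) + k • v a}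

theorem termMinimizers_nonempty (v : AddValuation K Γ₀) {g : K[X]} (hg : g ≠ 0) (a : K) :
    (v.termMinimizers g a).Nonempty := by
  obtain ⟨s, hs, hmin⟩ := g.support.exists_min_image
    (fun k => v (g.coeff k) + k • v a) (support_nonempty.mpr hg)
  exact ⟨s, Finset.mem_filter.mpr ⟨hs, hmin⟩⟩

theorem sum_prod_natCast_sub_mul_coeff_mul_pow_ne_zero [Nontrivial Γ₀] (v : AddValuation K Γ₀)
    (hv : ∀ m : ℤ, m ≠ 0 → v m = 0) {g : K[X]} {a : K} (ha : a ≠ 0) {s₁ : ℕ}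
    (hs₁ : s₁ ∈ v.termMinimizers g a) {T : Finset ℕ} (hs₁T : s₁ ∉ T)
    (hT : v.termMinimizers g a ⊆ insert s₁ T) :
    ∑ k ∈ Finset.range (g.natDegree + 1), (∏ s ∈ T, ((k : K) - s)) * g.coeff k * a ^ k ≠ 0 := by
  obtain ⟨hs₁supp, hs₁min⟩ := Finset.mem_filter.mp hs₁
  set t : ℕ → K := fun k => (∏ s ∈ T, ((k : K) - s)) * g.coeff k * a ^ k
  have hvt {k : ℕ} (hk : k ∉ T) : v (t k) = v (g.coeff k) + k • v a := by
    simp only [t, map_mul, map_pow, v.map_prod_natCast_sub_eq_zero hv hk, zero_add]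
  have ht₁ : t s₁ ≠ 0 := by
    have hprod : ∏ s ∈ T, ((s₁ : K) - s) ≠ 0 := by
      rw [← v.ne_top_iff, v.map_prod_natCast_sub_eq_zero hv hs₁T]
      exact v.map_one ▸ v.ne_top_iff.mpr one_ne_zero
    exact mul_ne_zero (mul_ne_zero hprod (mem_support_iff.mp hs₁supp)) (pow_ne_zero _ ha)
  have hlt : ∀ k ∈ Finset.range (g.natDegree + 1) \ {s₁}, v (t s₁) < v (t k) := by
    intro k hkrange
    by_cases htk : t k = 0
    · rw [htk, v.map_zero, lt_top_iff_ne_top, v.ne_top_iff]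
      exact ht₁
    have hkT : k ∉ T := fun hkT => htk <| by simp [t, Finset.prod_eq_zero hkT]
    have hk : k ∈ g.support := mem_support_iff.mpr fun h => htk (by simp [t, h])
    have hks₁ : k ≠ s₁ := by simpa using (Finset.mem_sdiff.mp hkrange).2
    have hkS : k ∉ v.termMinimizers g a := fun hkS =>
      (Finset.mem_insert.mp (hT hkS)).elim hks₁ hkT
    obtain ⟨l, hl, hlk⟩ : ∃ l ∈ g.support, v (g.coeff l) + l • v a < v (g.coeff k) + k • v a := by
      simpa [termMinimizers, hk] using hkS
    rw [hvt hs₁T, hvt hkT]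
    exact (hs₁min l hl).trans_lt hlk
  have hs₁range : s₁ ∈ Finset.range (g.natDegree + 1) :=
    Finset.mem_range_succ_iff.mpr (le_natDegree_of_mem_supp s₁ hs₁supp)
  rw [Ne, ← v.top_iff, v.map_sum_eq_of_lt hs₁range hlt, v.top_iff]
  exact ht₁

theorem rootMultiplicity_lt_card_termMinimizers [Nontrivial Γ₀] (v : AddValuation K Γ₀)
    (hv : ∀ m : ℤ, m ≠ 0 → v m = 0) {g : K[X]} (hg : g ≠ 0) {a : K} (ha : a ≠ 0) :
    g.rootMultiplicity a < (v.termMinimizers g a).card := by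
  classical
  by_contra! hcard
  obtain ⟨s₁, hs₁⟩ := v.termMinimizers_nonempty hg a
  set T := (v.termMinimizers g a).erase s₁
  have hT : T.card < g.rootMultiplicity a := by
    have : T.card + 1 = (v.termMinimizers g a).card := Finset.card_erase_add_one hs₁
    omega
  have hQ : (∏ s ∈ T, (X - C (s : K))).natDegree < g.rootMultiplicity a :=
    (natDegree_prod_le _ _).trans_lt <|
      (Finset.sum_le_card_nsmul _ _ 1 fun s _ => natDegree_X_sub_C_le _).trans_lt
        (by simpa using hT)
  apply v.sum_prod_natCast_sub_mul_coeff_mul_pow_ne_zero hv ha hs₁ (Finset.notMem_erase s₁ _)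
    (Finset.insert_erase hs₁).superset
  simpa [eval_prod] using sum_eval_mul_coeff_mul_pow_eq_zero hQ

section OfReal

variable [DecidableEq K] (val : K → ℝ) (hval_one : val 1 = 0)
  (hval_mul : ∀ a b : K, a ≠ 0 → b ≠ 0 → val (a * b) = val a + val b)
  (hval_add : ∀ a b : K, a ≠ 0 → b ≠ 0 → a + b ≠ 0 → min (val a) (val b) ≤ val (a + b))

noncomputable def ofReal : AddValuation K (WithTop ℝ) :=
  AddValuation.of (fun x => if x = 0 then ⊤ else (val x : WithTop ℝ)) (if_pos rfl)
    (by simp [hval_one])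
    (fun x y => by
      by_cases hx : x = 0
      · simp [hx]
      by_cases hy : y = 0
      · simp [hy]
      by_cases hxy : x + y = 0
      · simp [hxy]
      simp only [if_neg hx, if_neg hy, if_neg hxy]
      exact_mod_cast hval_add x y hx hy hxy)
    (fun x y => by
      by_cases hx : x = 0
      · simp [hx]
      by_cases hy : y = 0
      · simp [hy]
      simp only [if_neg hx, if_neg hy, if_neg (mul_ne_zero hx hy)]
      exact_mod_cast hval_mul x y hx hy)

variable {val hval_one hval_mul hval_add}

theorem ofReal_apply_of_ne_zero {x : K} (hx : x ≠ 0) :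
    ofReal val hval_one hval_mul hval_add x = val x :=
  if_neg hx

theorem ofReal_apply_add_nsmul {c a : K} (hc : c ≠ 0) (ha : a ≠ 0) (i : ℕ) :
    ofReal val hval_one hval_mul hval_add c + i • ofReal val hval_one hval_mul hval_add a =
      ((val c + i * val a : ℝ) : WithTop ℝ) := by
  rw [ofReal_apply_of_ne_zero hc, ofReal_apply_of_ne_zero ha, ← WithTop.coe_nsmul,
    nsmul_eq_mul, WithTop.coe_add]

theorem coe_termMinimizers_ofReal (g : K[X]) {a : K} (ha : a ≠ 0) :
    (termMinimizers (ofReal val hval_one hval_mul hval_add) g a : Set ℕ) =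
      {i : ℕ | i ≤ g.natDegree ∧ g.coeff i ≠ 0 ∧ ∀ k ≤ g.natDegree, g.coeff k ≠ 0 →
        val (g.coeff i) + i * val a ≤ val (g.coeff k) + k * val a} := by
  have hsupp {k : ℕ} : k ∈ g.support ↔ k ≤ g.natDegree ∧ g.coeff k ≠ 0 :=
    ⟨fun hk => ⟨le_natDegree_of_mem_supp k hk, mem_support_iff.mp hk⟩,
      fun hk => mem_support_iff.mpr hk.2⟩
  ext i
  simp only [termMinimizers, Finset.coe_filter, Set.mem_ofPred_eq, hsupp, and_imp, and_assoc]
  refine and_congr_right fun _ => and_congr_right fun hi => forall₂_congr fun k _ => ?_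
  refine forall_congr' fun hk => ?_
  rw [ofReal_apply_add_nsmul hi ha, ofReal_apply_add_nsmul hk ha, WithTop.coe_le_coe]

end OfReal

end AddValuation

theorem rootMultiplicity_lt_card_minimizers_general (𝕂 : Type*) [Field 𝕂] [CharZero 𝕂]
    (val : 𝕂 → ℝ)
    (hval_mul : ∀ a b : 𝕂, a ≠ 0 → b ≠ 0 → val (a * b) = val a + val b)
    (hval_add : ∀ a b : 𝕂, a ≠ 0 → b ≠ 0 → a + b ≠ 0 → min (val a) (val b) ≤ val (a + b))
    (hval_int : ∀ m : ℤ, m ≠ 0 → val (m : 𝕂) = 0)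
    (n : ℕ) (g : 𝕂[X]) (hdeg : g.natDegree = n) (h0 : g.coeff 0 ≠ 0)
    (a : 𝕂) (ha : g.IsRoot a) :
    g.rootMultiplicity a <
      Set.ncard {i : ℕ | i ≤ n ∧ g.coeff i ≠ 0 ∧ ∀ k ≤ n, g.coeff k ≠ 0 →
          val (g.coeff i) + i * val a ≤ val (g.coeff k) + k * val a} := by
  classical
  subst hdeg
  have hval_one : val 1 = 0 := by simpa using hval_int 1 one_ne_zero
  have hg : g ≠ 0 := fun h => h0 (by simp [h])
  have ha₀ : a ≠ 0 := by
    rintro rfl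
    exact h0 (by rwa [coeff_zero_eq_eval_zero])
  set v := AddValuation.ofReal val hval_one hval_mul hval_add
  have hv (m : ℤ) (hm : m ≠ 0) : v m = 0 := by
    rw [AddValuation.ofReal_apply_of_ne_zero (Int.cast_ne_zero.mpr hm), hval_int m hm]
    rfl
  rw [← AddValuation.coe_termMinimizers_ofReal g ha₀, Set.ncard_coe_finset]
  exact v.rootMultiplicity_lt_card_termMinimizers hv hg ha₀

/-- let `g = ∑_{i=0}^n d_i x^i` with `d_0 ≠ 0 ≠ d_n` and let `a` be a root
of `g` of multiplicity `m ≥ 1`, `v = val(a)`. Then `m` is strictly smaller than the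
cardinality of the set `S(v)` of indices `i` with `d_i ≠ 0` at which `val(d_i) + i·v`
is minimal. -/
theorem rootMultiplicity_lt_card_minimizers (𝕂 : Type*) [Field 𝕂] [IsAlgClosed 𝕂] [CharZero 𝕂]
    (val : 𝕂 → ℝ)
    (hval_mul : ∀ a b : 𝕂, a ≠ 0 → b ≠ 0 → val (a * b) = val a + val b)
    (hval_add : ∀ a b : 𝕂, a ≠ 0 → b ≠ 0 → a + b ≠ 0 → min (val a) (val b) ≤ val (a + b))
    (hval_int : ∀ m : ℤ, m ≠ 0 → val (m : 𝕂) = 0)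
    (n : ℕ) (g : 𝕂[X]) (hdeg : g.natDegree = n) (h0 : g.coeff 0 ≠ 0)
    (a : 𝕂) (ha : g.IsRoot a) :
    g.rootMultiplicity a <
      Set.ncard {i : ℕ | i ≤ n ∧ g.coeff i ≠ 0 ∧ ∀ k ≤ n, g.coeff k ≠ 0 →
          val (g.coeff i) + i * val a ≤ val (g.coeff k) + k * val a} :=
  rootMultiplicity_lt_card_minimizers_general 𝕂 val hval_mul hval_add hval_int n g hdeg h0 a ha
end

section
/- Let K be a field of characteristic zero and let E be one of the five sets {0,1,2,3}, {0,1,2,4}, {0,2,3,4}, {0,3,4,6}, {0,2,3,6} (the exceptional configurations). Then there is no polynomial f ∈ K[x] having two distinct double roots (i.e. elements a ≠ b of K with (x−a)²(x−b)² dividing f) whose support {i ∈ ℕ : the coefficient of x^i in f is nonzero} equals E. -/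
open Polynomial

/-- for a field `K` of characteristic zero and `E` one of the five
exceptional configurations, there is no polynomial `f ∈ K[x]` with two distinct double
roots whose support equals `E`. -/
theorem no_two_double_roots_with_exceptional_support (K : Type*) [Field K] [CharZero K]
    (E : Finset ℕ)
    (hE : E = {0,1,2,3} ∨ E = {0,1,2,4} ∨ E = {0,2,3,4} ∨ E = {0,3,4,6} ∨ E = {0,2,3,6}) :
    ¬ ∃ f : K[X],
        (∃ a b : K, a ≠ b ∧ (X - C a) ^ 2 * (X - C b) ^ 2 ∣ f) ∧ f.support = E := by
  rintro ⟨f, ⟨a, b, hab, hdvd⟩, hsupp⟩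
  have hd : a - b ≠ 0 := sub_ne_zero.mpr hab
  have peel : ∀ {x y : K}, x ≠ 0 → x * y = 0 → y = 0 :=
    fun hx h => (mul_eq_zero.mp h).resolve_left hx
  obtain ⟨g, hg⟩ := hdvd
  have hea : f.eval a = 0 := by simp [hg]
  have heb : f.eval b = 0 := by simp [hg]
  have hfa : (derivative f).eval a = 0 := by simp [hg, derivative_mul, derivative_pow]
  have hfb : (derivative f).eval b = 0 := by simp [hg, derivative_mul, derivative_pow]
  have h2 : (2 : K) ≠ 0 := two_ne_zero
  rcases hE with rfl | rfl | rfl | rfl | rfl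
  · -- E = {0,1,2,3} : degree argument
    have h0 : f.coeff 0 ≠ 0 := by rw [← mem_support_iff, hsupp]; decide
    have hf0 : f ≠ 0 := fun h => h0 (by simp [h])
    have h4 : ((X - C a) ^ 2 * (X - C b) ^ 2).natDegree = 4 := by
      rw [natDegree_mul (pow_ne_zero _ (X_sub_C_ne_zero a)) (pow_ne_zero _ (X_sub_C_ne_zero b)),
        natDegree_pow, natDegree_pow]
      simp [natDegree_X_sub_C]
    have hle := natDegree_le_of_dvd ⟨g, hg⟩ hf0
    rw [h4] at hle
    have hmem : f.natDegree ∈ f.support := natDegree_mem_support_of_nonzero hf0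
    rw [hsupp] at hmem
    simp only [Finset.mem_insert, Finset.mem_singleton] at hmem
    omega
  · -- E = {0,1,2,4}
    have hc1 : f.coeff 1 ≠ 0 := by rw [← mem_support_iff, hsupp]; decide
    have hc4 : f.coeff 4 ≠ 0 := by rw [← mem_support_iff, hsupp]; decide
    set c0 := f.coeff 0; set c1 := f.coeff 1; set c2 := f.coeff 2; set c4 := f.coeff 4
    have ev : ∀ x : K, f.eval x = c0 + c1 * x + c2 * x ^ 2 + c4 * x ^ 4 := by
      intro x; rw [eval_eq_sum, sum_def, hsupp]
      simp [Finset.sum_insert, Finset.mem_insert]; ring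
    have dv : ∀ x : K, (derivative f).eval x = c1 + 2 * c2 * x + 4 * c4 * x ^ 3 := by
      intro x; rw [derivative_apply, sum_def, hsupp, eval_finset_sum]
      simp [Finset.sum_insert, Finset.mem_insert]; ring
    rw [ev] at hea heb; rw [dv] at hfa hfb
    have key : c4 * ((a + b) * (a - b) ^ 3) = 0 := by
      linear_combination ((a - b) / 2) * hfa + ((a - b) / 2) * hfb - hea + heb
    have hs : a + b = 0 := by
      rcases mul_eq_zero.mp (peel hc4 key) with h' | h'
      · exact h'
      · exact absurd h' (pow_ne_zero 3 hd)
    exact hc1 (by linear_combination (1 / 2 : K) * hfa + (1 / 2 : K) * hfb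
      - (c2 + 2 * c4 * (a ^ 2 - a * b + b ^ 2)) * hs)
  · -- E = {0,2,3,4}
    have hc0 : f.coeff 0 ≠ 0 := by rw [← mem_support_iff, hsupp]; decide
    have hc3 : f.coeff 3 ≠ 0 := by rw [← mem_support_iff, hsupp]; decide
    have hc4 : f.coeff 4 ≠ 0 := by rw [← mem_support_iff, hsupp]; decide
    set c0 := f.coeff 0; set c2 := f.coeff 2; set c3 := f.coeff 3; set c4 := f.coeff 4
    have ev : ∀ x : K, f.eval x = c0 + c2 * x ^ 2 + c3 * x ^ 3 + c4 * x ^ 4 := by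
      intro x; rw [eval_eq_sum, sum_def, hsupp]
      simp [Finset.sum_insert, Finset.mem_insert]; ring
    have dv : ∀ x : K, (derivative f).eval x = 2 * c2 * x + 3 * c3 * x ^ 2 + 4 * c4 * x ^ 3 := by
      intro x; rw [derivative_apply, sum_def, hsupp, eval_finset_sum]
      simp [Finset.sum_insert, Finset.mem_insert]; ring
    rw [ev] at hea heb; rw [dv] at hfa hfb
    have ha : a ≠ 0 := by rintro rfl; exact hc0 (by linear_combination hea)
    have hb : b ≠ 0 := by rintro rfl; exact hc0 (by linear_combination heb)
    have P3 : 3 * c3 + 4 * c4 * (a + b) = 0 := by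
      have h : (a - b) * (a * (b * (2 * (3 * c3 + 4 * c4 * (a + b))))) = 0 := by
        linear_combination 2 * b * hfa - 2 * a * hfb
      exact peel h2 (peel hb (peel ha (peel hd h)))
    have P5 : c3 * ((a + b) ^ 2 + 2 * (a * b)) + 2 * c4 * (a + b) ^ 3 = 0 := by
      have h : (a - b) * (c3 * ((a + b) ^ 2 + 2 * (a * b)) + 2 * c4 * (a + b) ^ 3) = 0 := by
        linear_combination (a + b) * hfa - (a + b) * hfb - 2 * hea + 2 * heb
      exact peel hd h
    have hs : a + b = 0 := by
      have h : c4 * ((a + b) * ((a - b) ^ 2 * 2)) = 0 := by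
        linear_combination 3 * P5 - ((a + b) ^ 2 + 2 * (a * b)) * P3
      have := peel hc4 h
      rcases mul_eq_zero.mp this with h' | h'
      · exact h'
      · exact absurd h' (mul_ne_zero (pow_ne_zero 2 hd) h2)
    exact hc3 (by linear_combination (1 / 3 : K) * P3 - (4 / 3 * c4) * hs)
  · -- E = {0,3,4,6}
    have hc0 : f.coeff 0 ≠ 0 := by rw [← mem_support_iff, hsupp]; decide
    have hc3 : f.coeff 3 ≠ 0 := by rw [← mem_support_iff, hsupp]; decide
    have hc4 : f.coeff 4 ≠ 0 := by rw [← mem_support_iff, hsupp]; decide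
    have hc6 : f.coeff 6 ≠ 0 := by rw [← mem_support_iff, hsupp]; decide
    set c0 := f.coeff 0; set c3 := f.coeff 3; set c4 := f.coeff 4; set c6 := f.coeff 6
    have ev : ∀ x : K, f.eval x = c0 + c3 * x ^ 3 + c4 * x ^ 4 + c6 * x ^ 6 := by
      intro x; rw [eval_eq_sum, sum_def, hsupp]
      simp [Finset.sum_insert, Finset.mem_insert]; ring
    have dv : ∀ x : K,
        (derivative f).eval x = 3 * c3 * x ^ 2 + 4 * c4 * x ^ 3 + 6 * c6 * x ^ 5 := by
      intro x; rw [derivative_apply, sum_def, hsupp, eval_finset_sum]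
      simp [Finset.sum_insert, Finset.mem_insert]; ring
    rw [ev] at hea heb; rw [dv] at hfa hfb
    have ha : a ≠ 0 := by rintro rfl; exact hc0 (by linear_combination hea)
    have hb : b ≠ 0 := by rintro rfl; exact hc0 (by linear_combination heb)
    have hR1 : 3 * c3 * (a + b) + 4 * c4 * ((a + b) ^ 2 - a * b)
        + 6 * c6 * ((a + b) ^ 4 - 3 * (a + b) ^ 2 * (a * b) + (a * b) ^ 2) = 0 := by
      have h : (a - b) * (3 * c3 * (a + b) + 4 * c4 * ((a + b) ^ 2 - a * b)
          + 6 * c6 * ((a + b) ^ 4 - 3 * (a + b) ^ 2 * (a * b) + (a * b) ^ 2)) = 0 := by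
        linear_combination hfa - hfb
      exact peel hd h
    have hG : 3 * c3 + 4 * c4 * (a + b) + 6 * c6 * (a + b) * ((a + b) ^ 2 - 2 * (a * b)) = 0 := by
      have h : (a - b) * (a * (b * (2 * (3 * c3 + 4 * c4 * (a + b)
          + 6 * c6 * (a + b) * ((a + b) ^ 2 - 2 * (a * b)))))) = 0 := by
        linear_combination 2 * b * hfa - 2 * a * hfb
      exact peel h2 (peel hb (peel ha (peel hd h)))
    have hR3 : c3 * ((a + b) ^ 2 - a * b) + c4 * ((a + b) ^ 3 - 2 * (a + b) * (a * b))
        + c6 * ((a + b) ^ 5 - 4 * (a + b) ^ 3 * (a * b) + 3 * (a + b) * (a * b) ^ 2) = 0 := by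
      have h : (a - b) * (c3 * ((a + b) ^ 2 - a * b) + c4 * ((a + b) ^ 3 - 2 * (a + b) * (a * b))
          + c6 * ((a + b) ^ 5 - 4 * (a + b) ^ 3 * (a * b) + 3 * (a + b) * (a * b) ^ 2)) = 0 := by
        linear_combination hea - heb
      exact peel hd h
    by_cases hs : a + b = 0
    · exact hc3 (by linear_combination (1 / 3 : K) * hG
        - (4 / 3 * c4 + 2 * c6 * ((a + b) ^ 2 - 2 * (a * b))) * hs)
    · have hR7 : 2 * c4 + 3 * c6 * ((a + b) ^ 2 - a * b) = 0 := by
        have h : a * (b * (2 * (2 * c4 + 3 * c6 * ((a + b) ^ 2 - a * b)))) = 0 := by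
          linear_combination (a + b) * hG - hR1
        exact peel h2 (peel hb (peel ha h))
      have hR8 : c4 * ((a + b) ^ 2 + 2 * (a * b))
          + 3 * c6 * ((a + b) ^ 2 - a * b) ^ 2 = 0 := by
        have h : (a + b) * (c4 * ((a + b) ^ 2 + 2 * (a * b))
            + 3 * c6 * ((a + b) ^ 2 - a * b) ^ 2) = 0 := by
          linear_combination ((a + b) ^ 2 - a * b) * hG - 3 * hR3
        exact peel hs h
      have hsp : (a + b) ^ 2 - a * b = 0 := by
        have h : c6 * (((a + b) ^ 2 - a * b) * ((a - b) ^ 2 * 3)) = 0 := by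
          linear_combination 2 * hR8 - ((a + b) ^ 2 + 2 * (a * b)) * hR7
        have := peel hc6 h
        rcases mul_eq_zero.mp this with h' | h'
        · exact h'
        · exact absurd h' (mul_ne_zero (pow_ne_zero 2 hd) (by norm_num))
      exact hc4 (by linear_combination (1 / 2 : K) * hR7 - (3 / 2 * c6) * hsp)
  · -- E = {0,2,3,6}
    have hc0 : f.coeff 0 ≠ 0 := by rw [← mem_support_iff, hsupp]; decide
    have hc2 : f.coeff 2 ≠ 0 := by rw [← mem_support_iff, hsupp]; decide
    have hc3 : f.coeff 3 ≠ 0 := by rw [← mem_support_iff, hsupp]; decide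
    have hc6 : f.coeff 6 ≠ 0 := by rw [← mem_support_iff, hsupp]; decide
    set c0 := f.coeff 0; set c2 := f.coeff 2; set c3 := f.coeff 3; set c6 := f.coeff 6
    have ev : ∀ x : K, f.eval x = c0 + c2 * x ^ 2 + c3 * x ^ 3 + c6 * x ^ 6 := by
      intro x; rw [eval_eq_sum, sum_def, hsupp]
      simp [Finset.sum_insert, Finset.mem_insert]; ring
    have dv : ∀ x : K,
        (derivative f).eval x = 2 * c2 * x + 3 * c3 * x ^ 2 + 6 * c6 * x ^ 5 := by
      intro x; rw [derivative_apply, sum_def, hsupp, eval_finset_sum]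
      simp [Finset.sum_insert, Finset.mem_insert]; ring
    rw [ev] at hea heb; rw [dv] at hfa hfb
    have ha : a ≠ 0 := by rintro rfl; exact hc0 (by linear_combination hea)
    have hb : b ≠ 0 := by rintro rfl; exact hc0 (by linear_combination heb)
    have hQ1 : 2 * c2 + 3 * c3 * (a + b)
        + 6 * c6 * ((a + b) ^ 4 - 3 * (a + b) ^ 2 * (a * b) + (a * b) ^ 2) = 0 := by
      have h : (a - b) * (2 * c2 + 3 * c3 * (a + b)
          + 6 * c6 * ((a + b) ^ 4 - 3 * (a + b) ^ 2 * (a * b) + (a * b) ^ 2)) = 0 := by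
        linear_combination hfa - hfb
      exact peel hd h
    have hQ5 : c3 + 2 * c6 * (a + b) * ((a + b) ^ 2 - 2 * (a * b)) = 0 := by
      have h : (a - b) * (a * (b * (6 * (c3
          + 2 * c6 * (a + b) * ((a + b) ^ 2 - 2 * (a * b)))))) = 0 := by
        linear_combination 2 * b * hfa - 2 * a * hfb
      exact peel (by norm_num : (6 : K) ≠ 0) (peel hb (peel ha (peel hd h)))
    have hQ6 : c3 * ((a + b) ^ 2 + 2 * (a * b))
        + c6 * (4 * (a + b) ^ 5 - 10 * (a + b) ^ 3 * (a * b)) = 0 := by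
      have h : (a - b) * (c3 * ((a + b) ^ 2 + 2 * (a * b))
          + c6 * (4 * (a + b) ^ 5 - 10 * (a + b) ^ 3 * (a * b))) = 0 := by
        linear_combination (a + b) * hfa - (a + b) * hfb - 2 * hea + 2 * heb
      exact peel hd h
    have key : (a + b) * ((a + b) ^ 2 - a * b) = 0 := by
      have h : c6 * ((a + b) * (((a + b) ^ 2 - a * b) * ((a - b) ^ 2 * 2))) = 0 := by
        linear_combination hQ6 - ((a + b) ^ 2 + 2 * (a * b)) * hQ5
      have := peel hc6 h
      rcases mul_eq_zero.mp this with h' | h'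
      · exact mul_eq_zero_of_left h' _
      · rcases mul_eq_zero.mp h' with h'' | h''
        · exact mul_eq_zero_of_right _ h''
        · exact absurd h'' (mul_ne_zero (pow_ne_zero 2 hd) h2)
    rcases mul_eq_zero.mp key with hs | hsp
    · exact hc3 (by linear_combination hQ5 - (2 * c6 * ((a + b) ^ 2 - 2 * (a * b))) * hs)
    · exact hc2 (by linear_combination (1 / 2 : K) * hQ1 - (3 / 2 * (a + b)) * hQ5
        + 3 * c6 * (a * b) * hsp)
end

section
/- Let K be a field of characteristic zero, let 0 < i₂ < i₃ be integers, and let g = γ₀ + γ₂ x^{i₂} + γ₃ x^{i₃} ∈ K[x] be a nonzero polynomial. Suppose that 1 and β are both roots of g of multiplicity at least 2, where β ∈ K and β ≠ 1. Then β^{i₂} = β^{i₃} = 1; in particular β is a root of unity whose order is greater than 1 and divides gcd(i₂, i₃). -/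
open Polynomial

lemma double_root_conds {K : Type*} [Field K] (g : K[X]) (a : K)
    (h : (X - C a)^2 ∣ g) : g.eval a = 0 ∧ (derivative g).eval a = 0 := by
  obtain ⟨q, hq⟩ := h
  constructor
  · simp [hq]
  · have : derivative g = (X - C a) * (C 2 * q + (X - C a) * derivative q) := by
      rw [hq]
      simp only [derivative_mul, derivative_pow, derivative_sub, derivative_X, derivative_C]
      ring
    simp [this]

/-- let `K` be a field of characteristic zero, `0 < i₂ < i₃`, and let
`g = γ₀ + γ₂ x^{i₂} + γ₃ x^{i₃}` be a nonzero polynomial having both `1` and `β ≠ 1`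
as roots of multiplicity at least 2. Then `β^{i₂} = β^{i₃} = 1`; in particular `β` is
a root of unity of order `> 1` dividing `gcd(i₂, i₃)`. -/
theorem trinomial_two_double_roots (K : Type*) [Field K] [CharZero K]
    (i₂ i₃ : ℕ) (h₂ : 0 < i₂) (h₂₃ : i₂ < i₃) (γ₀ γ₂ γ₃ : K) (β : K) (hβ : β ≠ 1)
    (hg : (C γ₀ + C γ₂ * X ^ i₂ + C γ₃ * X ^ i₃ : K[X]) ≠ 0)
    (h1 : (X - 1) ^ 2 ∣ (C γ₀ + C γ₂ * X ^ i₂ + C γ₃ * X ^ i₃ : K[X]))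
    (hb : (X - C β) ^ 2 ∣ (C γ₀ + C γ₂ * X ^ i₂ + C γ₃ * X ^ i₃ : K[X])) :
    β ^ i₂ = 1 ∧ β ^ i₃ = 1 ∧ 1 < orderOf β ∧ orderOf β ∣ Nat.gcd i₂ i₃ := by
  set g : K[X] := C γ₀ + C γ₂ * X ^ i₂ + C γ₃ * X ^ i₃ with hgdef
  have h1' : (X - C (1:K))^2 ∣ g := by simpa using h1
  obtain ⟨E1, D1⟩ := double_root_conds g 1 h1'
  obtain ⟨Eb, Db⟩ := double_root_conds g β hb
  have hdg : derivative g = C γ₂ * (C (i₂:K) * X ^ (i₂ - 1)) + C γ₃ * (C (i₃:K) * X ^ (i₃ - 1)) := by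
    simp [hgdef, derivative_X_pow]
  rw [hdg] at D1 Db
  simp only [hgdef, eval_add, eval_mul, eval_pow, eval_C, eval_X, eval_one, one_pow, mul_one] at E1 D1 Eb Db
  have hi₂ : (i₂:K) ≠ 0 := Nat.cast_ne_zero.mpr h₂.ne'
  have hi₃ : (i₃:K) ≠ 0 := Nat.cast_ne_zero.mpr (by omega)
  have hii : (i₃:K) - (i₂:K) ≠ 0 := by
    have : (i₂:K) ≠ (i₃:K) := by exact_mod_cast h₂₃.ne
    exact sub_ne_zero.mpr (Ne.symm this)
  have hγ₃ : γ₃ ≠ 0 := by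
    intro h
    have hγ₂ : γ₂ = 0 := by
      have h0 : γ₂ * (i₂:K) = 0 := by linear_combination D1 - (i₃:K) * h
      exact (mul_eq_zero.mp h0).resolve_right hi₂
    have hγ₀ : γ₀ = 0 := by linear_combination E1 - hγ₂ - h
    exact hg (by simp [hgdef, hγ₀, hγ₂, h])
  have hγ₀ : γ₀ ≠ 0 := by
    intro h
    have hc : γ₃ * ((i₃:K) - (i₂:K)) = 0 := by
      linear_combination D1 - (i₂:K) * E1 + (i₂:K) * h
    rcases mul_eq_zero.mp hc with h' | h'
    · exact hγ₃ h'
    · exact hii h'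
  have hβ0 : β ≠ 0 := by
    intro h
    apply hγ₀
    have := Eb
    rw [h, zero_pow h₂.ne', zero_pow (by omega : i₃ ≠ 0)] at this
    linear_combination this
  have hc : γ₃ * (i₃:K) * (β ^ (i₃-1) - β ^ (i₂-1)) = 0 := by
    linear_combination Db - β ^ (i₂-1) * D1
  have hpow : β ^ (i₃ - 1) = β ^ (i₂ - 1) := by
    rcases mul_eq_zero.mp hc with h' | h'
    · exact absurd h' (mul_ne_zero hγ₃ hi₃)
    · exact sub_eq_zero.mp h'
  have hpow' : β ^ i₃ = β ^ i₂ := by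
    have e3 : β ^ i₃ = β ^ (i₃ - 1) * β := by
      rw [← pow_succ]; congr 1; omega
    have e2 : β ^ i₂ = β ^ (i₂ - 1) * β := by
      rw [← pow_succ]; congr 1; omega
    rw [e3, e2, hpow]
  have hs : γ₂ + γ₃ ≠ 0 := by
    intro h
    exact hγ₀ (by linear_combination E1 - h)
  have hfin : (γ₂ + γ₃) * (β ^ i₂ - 1) = 0 := by
    linear_combination Eb - E1 - γ₃ * hpow'
  have t1 : β ^ i₂ = 1 := by
    rcases mul_eq_zero.mp hfin with h' | h'
    · exact absurd h' hs
    · exact sub_eq_zero.mp h'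
  have t2 : β ^ i₃ = 1 := hpow'.trans t1
  have hd2 : orderOf β ∣ i₂ := orderOf_dvd_of_pow_eq_one t1
  have hd3 : orderOf β ∣ i₃ := orderOf_dvd_of_pow_eq_one t2
  have hne : orderOf β ≠ 1 := fun h => hβ (orderOf_eq_one_iff.mp h)
  have hpos : 0 < orderOf β := Nat.pos_of_dvd_of_pos hd2 h₂
  exact ⟨t1, t2, by omega, Nat.dvd_gcd hd2 hd3⟩
end

section
/- Let 0 ≤ i₁ < i₂ < i₃ < i₄ be natural numbers, J = {i₁,i₂,i₃,i₄}, and s ∈ ℕ. Then the following identities hold in ℤ[x]: (1) x^{2s}·D_J(x) = D_{{i₁+s, i₂+s, i₃+s, i₄+s}}(x); (2) if s ≥ 1, D_{{s·i₁, s·i₂, s·i₃, s·i₄}}(x) = s²·D_J(x^s); (3) for positive integers i < j < k, D_{{0,i,j,k}}(x) = i·k·x^i(x^{k−i}−1)(x^j−1) − i·j·x^i(x^{j−i}−1)(x^k−1) − j·k·x^j(x^{k−j}−1)(x^i−1); (4) for positive integers i < j < k, x^{i+j+k}·D_{{0,i,j,k}}(x^{−1}) = D_{{0,i,j,k}}(x),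 i.e. for every field F and every nonzero x ∈ F, x^{i+j+k}·D_{{0,i,j,k}}(x^{−1}) = D_{{0,i,j,k}}(x). -/
/-!
Laplace expansion of `𝐌_J` along the rows `(1, i)` and `(x^i, i·x^i)` pairs a `2 × 2` minor
`i_q - i_p` with a complementary minor `(i_s - i_r) x^{i_r + i_s}`; collecting the two terms of
each splitting of `J` into two pairs gives
`D_J = Σ ± (i_q - i_p)(i_s - i_r) (x^{i_p + i_q} + x^{i_r + i_s})`.
In this form every identity is visible term by term: a translation of `J` by `s` keeps the
differences and multiplies each monomial by `x^{2s}`, a dilation by `s` scales both differences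
by `s` and substitutes `x^s`, and `x^{Σ J}` times `x ↦ x⁻¹` swaps the two monomials of each pair.
-/

open Polynomial

universe u

/-- The 4×4 matrix `𝐌_J(x)` for `J = {a,b,c,d}` (columns in the given order),
whose column for exponent `i` is `(1, i, x^i, i·x^i)ᵀ`, and its determinant `D_J`. -/
noncomputable def Dfour (a b c d : ℕ) : Polynomial ℤ :=
  (Matrix.of fun r (j : Fin 4) =>
    ![(1 : Polynomial ℤ), ((![a,b,c,d] j : ℕ) : Polynomial ℤ),
      X ^ (![a,b,c,d] j), ((![a,b,c,d] j : ℕ) : Polynomial ℤ) * X ^ (![a,b,c,d] j)] r).det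

theorem Matrix.det_of_one_a_y_mul {R : Type*} [CommRing R] (a y : Fin 4 → R) :
    (Matrix.of ![1, a, y, a * y]).det =
      (a 1 - a 0) * (a 3 - a 2) * (y 0 * y 1 + y 2 * y 3)
        - (a 2 - a 0) * (a 3 - a 1) * (y 0 * y 2 + y 1 * y 3)
        + (a 3 - a 0) * (a 2 - a 1) * (y 0 * y 3 + y 1 * y 2) := by
  rw [det_succ_row_zero]
  simp only [Nat.succ_eq_add_one, Nat.reduceAdd, Fin.isValue, of_apply, cons_val', Pi.one_apply,
    Pi.mul_apply, cons_val_fin_one, cons_val_zero, mul_one, det_fin_three, submatrix_apply,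
    Fin.succ_zero_eq_one, Fin.succAbove, Fin.castSucc_zero, cons_val_one, Fin.succ_one_eq_two,
    Fin.castSucc_one, cons_val, Fin.reduceSucc, Fin.reduceCastSucc, Fin.sum_univ_succ,
    Fin.coe_ofNat_eq_mod, Nat.zero_mod, pow_zero, lt_self_iff_false, ↓reduceIte, not_lt_zero,
    one_mul, Fin.val_succ, Fin.succ_pos, zero_add, pow_one, Fin.lt_one_iff, Fin.reduceEq, neg_mul,
    neg_sub, even_two, Even.neg_pow, one_pow, Fin.reduceLT, Finset.univ_unique,
    Fin.default_eq_zero, Fin.val_eq_zero, Finset.sum_singleton]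
  ring

theorem Dfour_eq (a b c d : ℕ) : Dfour a b c d =
    (b - a : ℤ[X]) * (d - c : ℤ[X]) * (X ^ (a + b) + X ^ (c + d))
      - (c - a : ℤ[X]) * (d - b : ℤ[X]) * (X ^ (a + c) + X ^ (b + d))
      + (d - a : ℤ[X]) * (c - b : ℤ[X]) * (X ^ (a + d) + X ^ (b + c)) := by
  set n := ![a, b, c, d]
  have hM : (Matrix.of fun r (j : Fin 4) =>
      ![(1 : ℤ[X]), ((n j : ℕ) : ℤ[X]), X ^ n j, ((n j : ℕ) : ℤ[X]) * X ^ n j] r) =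
      Matrix.of ![1, fun j => ((n j : ℕ) : ℤ[X]), fun j => X ^ n j,
        (fun j => ((n j : ℕ) : ℤ[X])) * fun j => X ^ n j] := by
    ext r j
    fin_cases r <;> rfl
  rw [Dfour, hM, Matrix.det_of_one_a_y_mul]
  simp only [Fin.isValue, Matrix.cons_val_zero, Matrix.cons_val_one, Matrix.cons_val, pow_add, n]

theorem X_pow_two_mul_mul_Dfour (a b c d s : ℕ) :
    (X : ℤ[X]) ^ (2 * s) * Dfour a b c d = Dfour (a + s) (b + s) (c + s) (d + s) := by
  simp only [Dfour_eq, Nat.cast_add]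
  ring

theorem Dfour_mul_eq_comp (a b c d s : ℕ) :
    Dfour (s * a) (s * b) (s * c) (s * d) = C ((s : ℤ) ^ 2) * (Dfour a b c d).comp (X ^ s) := by
  simp only [Dfour_eq, Nat.cast_mul, add_comp, sub_comp, mul_comp, natCast_comp, pow_comp, X_comp,
    ← pow_mul, map_pow, map_natCast]
  ring

theorem Dfour_zero_eq {i j k : ℕ} (hij : i ≤ j) (hjk : j ≤ k) :
    Dfour 0 i j k
      = C ((i : ℤ) * (k : ℤ)) * X ^ i * (X ^ (k - i) - 1) * (X ^ j - 1)
        - C ((i : ℤ) * (j : ℤ)) * X ^ i * (X ^ (j - i) - 1) * (X ^ k - 1)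
        - C ((j : ℤ) * (k : ℤ)) * X ^ j * (X ^ (k - j) - 1) * (X ^ i - 1) := by
  obtain ⟨q, rfl⟩ := Nat.exists_eq_add_of_le hij
  obtain ⟨r, rfl⟩ := Nat.exists_eq_add_of_le hjk
  rw [Nat.add_sub_cancel_left, Nat.add_sub_cancel_left, add_assoc i, Nat.add_sub_cancel_left]
  simp only [Dfour_eq, map_mul, map_add, map_natCast, Nat.cast_add, Nat.cast_zero, pow_add]
  ring

theorem pow_add_mul_inv_pow_add_inv_pow {K : Type*} [Semifield K] {x : K} (hx : x ≠ 0)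
    (m n : ℕ) : x ^ (m + n) * (x⁻¹ ^ m + x⁻¹ ^ n) = x ^ n + x ^ m := by
  rw [pow_add, mul_add, inv_pow, inv_pow]
  field_simp

theorem pow_mul_aeval_inv_Dfour {K : Type*} [Field K] {x : K} (hx : x ≠ 0) (a b c d : ℕ) :
    x ^ (a + b + c + d) * aeval x⁻¹ (Dfour a b c d) = aeval x (Dfour a b c d) := by
  simp only [Dfour_eq, map_add, map_sub, map_mul, map_natCast, map_pow, aeval_X]
  linear_combination
    (b - a : K) * (d - c : K) * pow_add_mul_inv_pow_add_inv_pow hx (a + b) (c + d)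
      - (c - a : K) * (d - b : K) * pow_add_mul_inv_pow_add_inv_pow hx (a + c) (b + d)
      + (d - a : K) * (c - b : K) * pow_add_mul_inv_pow_add_inv_pow hx (a + d) (b + c)

theorem Dfour_identities_general (i₁ i₂ i₃ i₄ s i j k : ℕ)
    (hij : i < j) (hjk : j < k) :
    (X : Polynomial ℤ) ^ (2 * s) * Dfour i₁ i₂ i₃ i₄
        = Dfour (i₁ + s) (i₂ + s) (i₃ + s) (i₄ + s) ∧
    (1 ≤ s → Dfour (s * i₁) (s * i₂) (s * i₃) (s * i₄)
        = C ((s : ℤ) ^ 2) * (Dfour i₁ i₂ i₃ i₄).comp (X ^ s)) ∧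
    (Dfour 0 i j k
        = C ((i : ℤ) * (k : ℤ)) * X ^ i * (X ^ (k - i) - 1) * (X ^ j - 1)
          - C ((i : ℤ) * (j : ℤ)) * X ^ i * (X ^ (j - i) - 1) * (X ^ k - 1)
          - C ((j : ℤ) * (k : ℤ)) * X ^ j * (X ^ (k - j) - 1) * (X ^ i - 1)) ∧
    (∀ (F : Type u) [Field F] (x : F), x ≠ 0 →
        x ^ (i + j + k) * (Polynomial.aeval x⁻¹ (Dfour 0 i j k))
          = Polynomial.aeval x (Dfour 0 i j k)) :=
  ⟨X_pow_two_mul_mul_Dfour .., fun _ => Dfour_mul_eq_comp .., Dfour_zero_eq hij.le hjk.le,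
    fun _ _ _ hx => by simpa only [zero_add] using pow_mul_aeval_inv_Dfour hx 0 i j k⟩

/-- the identities of Lemma (i=0): translation, dilation, the explicit
formula for `D_{{0,i,j,k}}`, and the palindromic symmetry `x^{i+j+k} D(x⁻¹) = D(x)`. -/
theorem Dfour_identities (i₁ i₂ i₃ i₄ s i j k : ℕ)
    (h₁₂ : i₁ < i₂) (h₂₃ : i₂ < i₃) (h₃₄ : i₃ < i₄)
    (hi : 0 < i) (hij : i < j) (hjk : j < k) :
    (X : Polynomial ℤ) ^ (2 * s) * Dfour i₁ i₂ i₃ i₄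
        = Dfour (i₁ + s) (i₂ + s) (i₃ + s) (i₄ + s) ∧
    (1 ≤ s → Dfour (s * i₁) (s * i₂) (s * i₃) (s * i₄)
        = C ((s : ℤ) ^ 2) * (Dfour i₁ i₂ i₃ i₄).comp (X ^ s)) ∧
    (Dfour 0 i j k
        = C ((i : ℤ) * (k : ℤ)) * X ^ i * (X ^ (k - i) - 1) * (X ^ j - 1)
          - C ((i : ℤ) * (j : ℤ)) * X ^ i * (X ^ (j - i) - 1) * (X ^ k - 1)
          - C ((j : ℤ) * (k : ℤ)) * X ^ j * (X ^ (k - j) - 1) * (X ^ i - 1)) ∧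
    (∀ (F : Type u) [Field F] (x : F), x ≠ 0 →
        x ^ (i + j + k) * (Polynomial.aeval x⁻¹ (Dfour 0 i j k))
          = Polynomial.aeval x (Dfour 0 i j k)) :=
  Dfour_identities_general i₁ i₂ i₃ i₄ s i j k hij hjk
end

section
/- Let K be an algebraically closed field of characteristic zero, let 0 ≤ i₁ < i₂ < i₃ < i₄ be natural numbers, J = {i₁,i₂,i₃,i₄}, and β ∈ K. Then the 4×4 matrix 𝐌_J(β) over K, whose j-th column is (1, i_j, β^{i_j}, i_j·β^{i_j})ᵀ, has rank 2 if and only if β^{i₁} = β^{i₂} = β^{i₃} = β^{i₄}. -/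
/-- for an algebraically closed field `K` of characteristic zero,
`i₁ < i₂ < i₃ < i₄`, and `β ∈ K`, the 4×4 matrix `𝐌_J(β)` whose `j`-th column is
`(1, i_j, β^{i_j}, i_j·β^{i_j})ᵀ` has rank 2 iff `β^{i₁} = β^{i₂} = β^{i₃} = β^{i₄}`. -/
theorem rank_MJ_eq_two_iff (K : Type*) [Field K] [IsAlgClosed K] [CharZero K]
    (i₁ i₂ i₃ i₄ : ℕ) (h₁₂ : i₁ < i₂) (h₂₃ : i₂ < i₃) (h₃₄ : i₃ < i₄) (β : K) :
    (Matrix.of fun (r : Fin 4) (j : Fin 4) =>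
      ![(1 : K), ((![i₁,i₂,i₃,i₄] j : ℕ) : K), β ^ (![i₁,i₂,i₃,i₄] j),
        ((![i₁,i₂,i₃,i₄] j : ℕ) : K) * β ^ (![i₁,i₂,i₃,i₄] j)] r).rank = 2
    ↔ (β ^ i₁ = β ^ i₂ ∧ β ^ i₂ = β ^ i₃ ∧ β ^ i₃ = β ^ i₄) := by
  set M : Matrix (Fin 4) (Fin 4) K := Matrix.of fun (r : Fin 4) (j : Fin 4) =>
      ![(1 : K), ((![i₁,i₂,i₃,i₄] j : ℕ) : K), β ^ (![i₁,i₂,i₃,i₄] j),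
        ((![i₁,i₂,i₃,i₄] j : ℕ) : K) * β ^ (![i₁,i₂,i₃,i₄] j)] r with hM
  have hrank : M.rank = Module.finrank K (Submodule.span K (Set.range M)) :=
    Matrix.rank_eq_finrank_span_row M
  -- distinctness of the casts
  have hA12 : ((i₁ : K)) ≠ (i₂ : K) := by exact_mod_cast h₁₂.ne
  have hA13 : ((i₁ : K)) ≠ (i₃ : K) := by exact_mod_cast (h₁₂.trans h₂₃).ne
  have hA23 : ((i₂ : K)) ≠ (i₃ : K) := by exact_mod_cast h₂₃.ne
  -- rows
  have hM0 : M 0 = fun j => (1 : K) := by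
    funext j; simp [hM]
  have hM1 : M 1 = fun j => ((![i₁,i₂,i₃,i₄] j : ℕ) : K) := by
    funext j; simp [hM]
  have hM2 : M 2 = fun j => β ^ (![i₁,i₂,i₃,i₄] j) := by
    funext j; simp [hM]
  have hM3 : M 3 = fun j => ((![i₁,i₂,i₃,i₄] j : ℕ) : K) * β ^ (![i₁,i₂,i₃,i₄] j) := by
    funext j; simp [hM]
  -- linear independence of first two rows
  have hli : LinearIndependent K ![M 0, M 1] := by
    rw [LinearIndependent.pair_iff]
    intro s t hst
    have e0 := congrFun hst 0
    have e1 := congrFun hst 1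
    simp [hM0, hM1] at e0 e1
    have ht : t = 0 := by
      have : t * ((i₂ : K) - (i₁ : K)) = 0 := by linear_combination e1 - e0
      rcases mul_eq_zero.mp this with h | h
      · exact h
      · exact absurd (by linear_combination h) hA12.symm
    subst ht
    simp at e0
    exact ⟨e0, rfl⟩
  have hrange2 : Set.range ![M 0, M 1] = {M 0, M 1} := by
    simp [Matrix.range_cons, Matrix.range_empty]
    exact Set.pair_comm _ _
  have hspan2 : Module.finrank K (Submodule.span K ({M 0, M 1} : Set (Fin 4 → K))) = 2 := by
    rw [← hrange2, finrank_span_eq_card hli]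
    simp
  have hle : Submodule.span K ({M 0, M 1} : Set (Fin 4 → K)) ≤ Submodule.span K (Set.range M) := by
    apply Submodule.span_mono
    intro x hx
    rcases hx with h | h
    · exact ⟨0, h.symm⟩
    · exact ⟨1, (Set.mem_singleton_iff.mp h).symm⟩
  constructor
  · -- rank = 2 → powers equal
    intro h2
    rw [hrank] at h2
    have heq : Submodule.span K ({M 0, M 1} : Set (Fin 4 → K)) = Submodule.span K (Set.range M) :=
      Submodule.eq_of_le_of_finrank_le hle (by rw [hspan2, h2])
    have hmem2 : M 2 ∈ Submodule.span K ({M 0, M 1} : Set (Fin 4 → K)) := by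
      rw [heq]; exact Submodule.subset_span ⟨2, rfl⟩
    have hmem3 : M 3 ∈ Submodule.span K ({M 0, M 1} : Set (Fin 4 → K)) := by
      rw [heq]; exact Submodule.subset_span ⟨3, rfl⟩
    rw [Submodule.mem_span_pair] at hmem2 hmem3
    obtain ⟨x, y, hxy⟩ := hmem2
    obtain ⟨u, v, huv⟩ := hmem3
    have e : ∀ j : Fin 4, x + y * ((![i₁,i₂,i₃,i₄] j : ℕ) : K) = β ^ (![i₁,i₂,i₃,i₄] j) := by
      intro j
      have := congrFun hxy j
      simpa [hM0, hM1, hM2] using this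
    have f : ∀ j : Fin 4, u + v * ((![i₁,i₂,i₃,i₄] j : ℕ) : K)
        = ((![i₁,i₂,i₃,i₄] j : ℕ) : K) * β ^ (![i₁,i₂,i₃,i₄] j) := by
      intro j
      have := congrFun huv j
      simpa [hM0, hM1, hM3] using this
    have e0 := e 0; have e1 := e 1; have e2 := e 2; have e3 := e 3
    have f0 := f 0; have f1 := f 1; have f2 := f 2; have f3 := f 3
    simp only [Matrix.cons_val_zero, Matrix.cons_val_one, Matrix.head_cons,
      Matrix.cons_val_two, Matrix.tail_cons, Matrix.cons_val_three] at e0 e1 e2 e3 f0 f1 f2 f3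
    have hy : y = 0 := by
      have hprod : y * (((i₂:K) - i₁) * ((i₃:K) - i₁) * ((i₃:K) - i₂)) = 0 := by
        linear_combination ((i₃:K) - i₂) * ((i₁:K) * e0 - f0)
          - ((i₃:K) - (i₁:K)) * ((i₂:K) * e1 - f1)
          + ((i₂:K) - (i₁:K)) * ((i₃:K) * e2 - f2)
      rcases mul_eq_zero.mp hprod with h | h
      · exact h
      · exfalso
        rcases mul_eq_zero.mp h with h' | h'
        · rcases mul_eq_zero.mp h' with h'' | h''
          · exact hA12 (by linear_combination -h'')
          · exact hA13 (by linear_combination -h'')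
        · exact hA23 (by linear_combination -h')
    refine ⟨?_, ?_, ?_⟩
    · linear_combination e1 - e0 + ((i₁:K) - i₂) * hy
    · linear_combination e2 - e1 + ((i₂:K) - i₃) * hy
    · linear_combination e3 - e2 + ((i₃:K) - i₄) * hy
  · -- powers equal → rank = 2
    rintro ⟨hb1, hb2, hb3⟩
    have hball : ∀ j : Fin 4, β ^ (![i₁,i₂,i₃,i₄] j) = β ^ i₁ := by
      intro j
      fin_cases j
      · rfl
      · exact hb1.symm
      · exact (hb1.trans hb2).symm
      · exact (hb1.trans (hb2.trans hb3)).symm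
    have hM2' : M 2 = β ^ i₁ • M 0 := by
      funext j
      simp only [hM0, hM2, Pi.smul_apply, smul_eq_mul, mul_one]
      exact hball j
    have hM3' : M 3 = β ^ i₁ • M 1 := by
      funext j
      simp only [hM1, hM3, Pi.smul_apply, smul_eq_mul, hball j]
      exact mul_comm _ _
    have hspan : Submodule.span K (Set.range M) = Submodule.span K ({M 0, M 1} : Set (Fin 4 → K)) := by
      refine le_antisymm ?_ hle
      rw [Submodule.span_le]
      rintro x ⟨k, rfl⟩
      fin_cases k
      · exact Submodule.subset_span (Or.inl rfl)
      · exact Submodule.subset_span (Or.inr rfl)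
      · show M 2 ∈ (Submodule.span K ({M 0, M 1} : Set (Fin 4 → K)) : Set (Fin 4 → K))
        rw [SetLike.mem_coe, hM2']
        exact Submodule.smul_mem _ _ (Submodule.subset_span (Or.inl rfl))
      · show M 3 ∈ (Submodule.span K ({M 0, M 1} : Set (Fin 4 → K)) : Set (Fin 4 → K))
        rw [SetLike.mem_coe, hM3']
        exact Submodule.smul_mem _ _ (Submodule.subset_span (Or.inr rfl))
    rw [hrank, hspan, hspan2]
end

section
/- Let 𝕂 be an algebraically closed field of characteristic zero equipped with a rank-one valuation val : 𝕂* → ℝ such that val(m) = 0 for every nonzero integer m. Let i₁ < i₂ < i₃ be natural numbers and i₄ a natural number distinct from i₁, i₂, i₃, with J = {i₁,i₂,i₃,i₄}, and suppose g = gcd(i₃−i₁, i₂−i₁) > 1. Let β ∈ 𝕂 be a root of unity with β ≠ 1 and β^g = 1, and let b ∈ 𝕂 satisfy val(b − β) = v for some real v > 0. Then val(D_J(b)) = 4v if β^{i₄} = β^{i₁}, and val(D_J(b)) = v otherwise. -/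
open Polynomial

/-- `D_S` for a finite set `S` of naturals: if `S` has exactly four elements,
listed in increasing order, this is the determinant above; otherwise `0`. -/
noncomputable def DJ (S : Finset ℕ) : Polynomial ℤ :=
  match S.sort (· ≤ ·) with
  | [a, b, c, d] => Dfour a b c d
  | _ => 0

set_option linter.unusedSectionVars false
set_option maxHeartbeats 1600000

lemma Dfour_formula (p q r s : ℕ) : Dfour p q r s =
    ((q : Polynomial ℤ) - (p : Polynomial ℤ)) * ((s : Polynomial ℤ) - (r : Polynomial ℤ)) * (X^(p+q) + X^(r+s))
  - ((r : Polynomial ℤ) - (p : Polynomial ℤ)) * ((s : Polynomial ℤ) - (q : Polynomial ℤ)) * (X^(p+r) + X^(q+s))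
  + ((s : Polynomial ℤ) - (p : Polynomial ℤ)) * ((r : Polynomial ℤ) - (q : Polynomial ℤ)) * (X^(p+s) + X^(q+r)) := by
  unfold Dfour
  simp (config := { decide := true }) [Matrix.det_succ_row_zero, Fin.sum_univ_succ, Fin.isValue, Matrix.submatrix,
    Matrix.of_apply, Matrix.cons_val_zero, Matrix.cons_val_one, Matrix.head_cons,
    Matrix.cons_val_succ, Fin.succAbove, pow_add,
    show (Fin.castSucc 2 : Fin 4) = 2 from rfl, Matrix.cons_val_two, Matrix.vecTail, Matrix.vecHead]
  ring

lemma Dfour_perm_last (a b c x : ℕ) : Dfour a b x c = -Dfour a b c x := by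
  rw [Dfour_formula, Dfour_formula]; ring

lemma Dfour_perm_mid (a b c x : ℕ) : Dfour a x b c = Dfour a b c x := by
  rw [Dfour_formula, Dfour_formula]; ring

lemma Dfour_perm_first (a b c x : ℕ) : Dfour x a b c = -Dfour a b c x := by
  rw [Dfour_formula, Dfour_formula]; ring

section ValAux
variable {𝕂 : Type*} [Field 𝕂] [CharZero 𝕂] (val : 𝕂 → ℝ)

lemma val_one' (hm : ∀ a b : 𝕂, a ≠ 0 → b ≠ 0 → val (a * b) = val a + val b) :
    val (1 : 𝕂) = 0 := by
  have h := hm 1 1 one_ne_zero one_ne_zero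
  simp at h; linarith

lemma val_pow' (hm : ∀ a b : 𝕂, a ≠ 0 → b ≠ 0 → val (a * b) = val a + val b)
    {x : 𝕂} (hx : x ≠ 0) (n : ℕ) : val (x ^ n) = n * val x := by
  induction n with
  | zero => simp [val_one' val hm]
  | succ n ih =>
    rw [pow_succ, hm _ _ (pow_ne_zero _ hx) hx, ih]; push_cast; ring

lemma val_neg' (hm : ∀ a b : 𝕂, a ≠ 0 → b ≠ 0 → val (a * b) = val a + val b)
    (hi : ∀ m : ℤ, m ≠ 0 → val ((m : ℤ) : 𝕂) = 0) {x : 𝕂} (hx : x ≠ 0) :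
    val (-x) = val x := by
  have h1 : ((-1 : ℤ) : 𝕂) = -1 := by push_cast; ring
  have h2 : val (-1 : 𝕂) = 0 := by rw [← h1]; exact hi (-1) (by norm_num)
  have h3 : (-x) = (-1 : 𝕂) * x := by ring
  rw [h3, hm _ _ (by norm_num) hx, h2, zero_add]

lemma val_inv' (hm : ∀ a b : 𝕂, a ≠ 0 → b ≠ 0 → val (a * b) = val a + val b)
    {x : 𝕂} (hx : x ≠ 0) : val x⁻¹ = - val x := by
  have h := hm x x⁻¹ hx (inv_ne_zero hx)
  rw [mul_inv_cancel₀ hx, val_one' val hm] at h; linarith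

lemma val_mul₀ (hm : ∀ a b : 𝕂, a ≠ 0 → b ≠ 0 → val (a * b) = val a + val b)
    {x y : 𝕂} (hx : x ≠ 0) (hy : y ≠ 0) (h1 : val x = 0) (h2 : val y = 0) :
    x * y ≠ 0 ∧ val (x * y) = 0 := by
  refine ⟨mul_ne_zero hx hy, ?_⟩
  rw [hm _ _ hx hy, h1, h2, add_zero]

lemma val_add_of_lt' (hm : ∀ a b : 𝕂, a ≠ 0 → b ≠ 0 → val (a * b) = val a + val b)
    (ha' : ∀ a b : 𝕂, a ≠ 0 → b ≠ 0 → a + b ≠ 0 → min (val a) (val b) ≤ val (a + b))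
    (hi : ∀ m : ℤ, m ≠ 0 → val ((m : ℤ) : 𝕂) = 0)
    {a b : 𝕂} (ha : a ≠ 0) (hb : b ≠ 0) (hlt : val a < val b) :
    a + b ≠ 0 ∧ val (a + b) = val a := by
  have hne : a + b ≠ 0 := by
    intro h
    have hb' : b = -a := by linear_combination h
    rw [hb', val_neg' val hm hi ha] at hlt; exact lt_irrefl _ hlt
  refine ⟨hne, ?_⟩
  have h1 : min (val a) (val b) ≤ val (a + b) := ha' a b ha hb hne
  rw [min_eq_left hlt.le] at h1
  have h2 : (a + b) + (-b) = a := by ring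
  have h3 : min (val (a + b)) (val (-b)) ≤ val a := by
    have := ha' (a + b) (-b) hne (neg_ne_zero.2 hb) (by rw [h2]; exact ha)
    rwa [h2] at this
  rw [val_neg' val hm hi hb] at h3
  rcases min_le_iff.mp h3 with h | h
  · exact le_antisymm h h1
  · linarith

omit [CharZero 𝕂] in
lemma val_add_ge' (ha' : ∀ a b : 𝕂, a ≠ 0 → b ≠ 0 → a + b ≠ 0 → min (val a) (val b) ≤ val (a + b))
    (c : ℝ) {x y : 𝕂} (hx : x = 0 ∨ c ≤ val x) (hy : y = 0 ∨ c ≤ val y) :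
    x + y = 0 ∨ c ≤ val (x + y) := by
  by_cases hx0 : x = 0
  · simpa [hx0] using hy
  by_cases hy0 : y = 0
  · simpa [hy0] using hx
  rcases hx with h | hx; · exact absurd h hx0
  rcases hy with h | hy; · exact absurd h hy0
  by_cases hxy : x + y = 0
  · exact Or.inl hxy
  · right
    have := ha' x y hx0 hy0 hxy
    have hmin : c ≤ min (val x) (val y) := le_min hx hy
    linarith

omit [CharZero 𝕂] in
lemma val_sum_ge' (ha' : ∀ a b : 𝕂, a ≠ 0 → b ≠ 0 → a + b ≠ 0 → min (val a) (val b) ≤ val (a + b))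
    (c : ℝ) {ι : Type*} (s : Finset ι) (f : ι → 𝕂)
    (h : ∀ i ∈ s, f i = 0 ∨ c ≤ val (f i)) :
    (∑ i ∈ s, f i) = 0 ∨ c ≤ val (∑ i ∈ s, f i) := by
  classical
  induction s using Finset.induction_on with
  | empty => simp
  | @insert a s' ha ih =>
    rw [Finset.sum_insert ha]
    exact val_add_ge' val ha' c (h a (by simp)) (ih (fun i hi => h i (by simp [hi])))

lemma cast_choose_mul_factorial (n k : ℕ) :
    ((n.choose k : ℕ) : 𝕂) * (k.factorial : 𝕂) = ∏ j ∈ Finset.range k, ((n : 𝕂) - (j : 𝕂)) := by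
  induction k with
  | zero => simp
  | succ k ih =>
    rcases le_or_gt n k with h | h
    · rw [Nat.choose_eq_zero_of_lt (Nat.lt_succ_of_le h)]
      rw [Finset.prod_eq_zero (Finset.mem_range.2 (Nat.lt_succ_of_le h)) (by simp : ((n:𝕂) - (n:𝕂)) = 0)]
      simp
    · have h2 := Nat.choose_succ_right_eq n k
      have h3 : ((n - k : ℕ) : 𝕂) = (n : 𝕂) - (k : 𝕂) := by
        rw [Nat.cast_sub h.le]
      have h4 : ((n.choose (k+1) : ℕ) : 𝕂) * ((k : 𝕂) + 1) = ((n.choose k : ℕ) : 𝕂) * ((n : 𝕂) - (k : 𝕂)) := by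
        rw [← h3]; exact_mod_cast h2
      rw [Finset.prod_range_succ, ← ih, Nat.factorial_succ]
      push_cast
      linear_combination ((k.factorial : 𝕂)) * h4

lemma cast_choose_eq (n k : ℕ) :
    ((n.choose k : ℕ) : 𝕂) = (∏ j ∈ Finset.range k, ((n : 𝕂) - (j : 𝕂))) / (k.factorial : 𝕂) := by
  rw [eq_div_iff (by exact_mod_cast k.factorial_ne_zero)]
  exact cast_choose_mul_factorial n k

lemma pow_mul_taylor_coeff_monomial {β : 𝕂} (hβ : β ≠ 0) (c : 𝕂) (n k : ℕ) :
    β ^ k * (taylor β (C c * X ^ n)).coeff k = c * ((n.choose k : ℕ) : 𝕂) * β ^ n := by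
  rw [C_mul_X_pow_eq_monomial, taylor_coeff, hasseDeriv_monomial, eval_monomial]
  rcases le_or_gt k n with h | h
  · have hx : β ^ (n - k) * β ^ k = β ^ n := by rw [← pow_add, Nat.sub_add_cancel h]
    calc β ^ k * ((n.choose k : ℕ) * c * β ^ (n-k))
        = c * (n.choose k : ℕ) * (β ^ (n-k) * β ^ k) := by ring
      _ = c * (n.choose k : ℕ) * β ^ n := by rw [hx]
  · simp [Nat.choose_eq_zero_of_lt h]

lemma val_root_of_unity (hm : ∀ a b : 𝕂, a ≠ 0 → b ≠ 0 → val (a * b) = val a + val b)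
    {β : 𝕂} {g : ℕ} (hg : 0 < g) (hβg : β ^ g = 1) : β ≠ 0 ∧ val β = 0 := by
  have hβ0 : β ≠ 0 := by
    intro h; rw [h, zero_pow hg.ne'] at hβg; exact zero_ne_one hβg
  refine ⟨hβ0, ?_⟩
  have h1 : val (β ^ g) = g * val β := val_pow' val hm hβ0 g
  rw [hβg, val_one' val hm] at h1
  have hgne : (g : ℝ) ≠ 0 := Nat.cast_ne_zero.2 hg.ne'
  exact (mul_eq_zero.mp h1.symm).resolve_left hgne

lemma val_pow_sub_one (hm : ∀ a b : 𝕂, a ≠ 0 → b ≠ 0 → val (a * b) = val a + val b)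
    (ha' : ∀ a b : 𝕂, a ≠ 0 → b ≠ 0 → a + b ≠ 0 → min (val a) (val b) ≤ val (a + b))
    (hi : ∀ m : ℤ, m ≠ 0 → val ((m : ℤ) : 𝕂) = 0)
    {β : 𝕂} {g : ℕ} (hg : 0 < g) (hβg : β ^ g = 1)
    (m : ℕ) (hne : β ^ m ≠ 1) : val (β ^ m - 1) = 0 := by
  obtain ⟨hβ0, hvβ⟩ := val_root_of_unity val hm hg hβg
  set ζ := β ^ m with hζ
  have hζ0 : ζ ≠ 0 := pow_ne_zero _ hβ0
  have hvζ : val ζ = 0 := by rw [hζ, val_pow' val hm hβ0, hvβ, mul_zero]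
  have hζg : ζ ^ g = 1 := by rw [hζ, ← pow_mul, mul_comm, pow_mul, hβg, one_pow]
  have hζ1 : ζ - 1 ≠ 0 := sub_ne_zero.2 hne
  have hgeom : ∑ i ∈ Finset.range g, ζ ^ i = 0 := by
    have h := geom_sum_mul ζ g
    rw [hζg, sub_self] at h
    exact (mul_eq_zero.1 h).resolve_right hζ1
  set A := ∑ k ∈ Finset.range g, ∑ j ∈ Finset.range k, ζ ^ j with hA
  have hkey : (ζ - 1) * A = -(g : 𝕂) := by
    rw [hA, Finset.mul_sum]
    have hterm : ∀ k ∈ Finset.range g, (ζ - 1) * ∑ j ∈ Finset.range k, ζ ^ j = ζ ^ k - 1 := by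
      intro k _
      rw [mul_comm, geom_sum_mul]
    rw [Finset.sum_congr rfl hterm, Finset.sum_sub_distrib, hgeom, Finset.sum_const,
      Finset.card_range]
    simp
  have hg0 : ((g : ℤ) : 𝕂) ≠ 0 := by
    push_cast; exact Nat.cast_ne_zero.2 hg.ne'
  have hA0 : A ≠ 0 := by
    intro h; rw [h, mul_zero] at hkey
    apply hg0; push_cast; linear_combination hkey
  have h1 : val (ζ - 1) + val A = 0 := by
    rw [← hm _ _ hζ1 hA0, hkey]
    have h5 : -(g : 𝕂) = -((g : ℤ) : 𝕂) := by push_cast; ring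
    rw [h5, val_neg' val hm hi hg0, hi g (by exact_mod_cast hg.ne')]
  have h2 : 0 ≤ val (ζ - 1) := by
    have hmin : min (val ζ) (val (-1 : 𝕂)) ≤ val (ζ + (-1)) := by
      apply ha' _ _ hζ0 (by norm_num)
      rw [← sub_eq_add_neg]; exact hζ1
    rw [← sub_eq_add_neg] at hmin
    have hv1 : val (-1 : 𝕂) = 0 := by
      rw [val_neg' val hm hi one_ne_zero, val_one' val hm]
    rw [hvζ, hv1] at hmin; simpa using hmin
  have h3 : 0 ≤ val A := by
    have h4 : A = 0 ∨ (0:ℝ) ≤ val A := by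
      apply val_sum_ge' val ha'
      intro k _
      apply val_sum_ge' val ha'
      intro j _
      right
      rw [val_pow' val hm hζ0, hvζ, mul_zero]
    exact h4.resolve_left hA0
  linarith

lemma val_diff_nat (hi : ∀ m : ℤ, m ≠ 0 → val ((m : ℤ) : 𝕂) = 0)
    {m n : ℕ} (h : m ≠ n) : ((m : 𝕂) - (n : 𝕂)) ≠ 0 ∧ val ((m : 𝕂) - (n : 𝕂)) = 0 := by
  have h1 : ((m : 𝕂) - (n : 𝕂)) = (((m : ℤ) - (n : ℤ) : ℤ) : 𝕂) := by push_cast; ring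
  have h2 : ((m : ℤ) - (n : ℤ)) ≠ 0 := sub_ne_zero.2 (by exact_mod_cast h)
  constructor
  · rw [h1]; exact_mod_cast fun hh => h2 (by exact_mod_cast hh)
  · rw [h1]; exact hi _ h2

lemma val_poly_eval (hm : ∀ a b : 𝕂, a ≠ 0 → b ≠ 0 → val (a * b) = val a + val b)
    (ha' : ∀ a b : 𝕂, a ≠ 0 → b ≠ 0 → a + b ≠ 0 → min (val a) (val b) ≤ val (a + b))
    (hi : ∀ m : ℤ, m ≠ 0 → val ((m : ℤ) : 𝕂) = 0)
    (Q : Polynomial 𝕂) {t : 𝕂} (ht : t ≠ 0) {v : ℝ} (hv : 0 < v) (hvt : val t = v) (n : ℕ)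
    (hlow : ∀ k, k < n → Q.coeff k = 0) (hn0 : Q.coeff n ≠ 0) (hvn : val (Q.coeff n) = 0)
    (hnn : ∀ k, Q.coeff k = 0 ∨ 0 ≤ val (Q.coeff k)) :
    Q.eval t ≠ 0 ∧ val (Q.eval t) = n * v := by
  have hmem : n ∈ Finset.range (Q.natDegree + 1) :=
    Finset.mem_range.2 (Nat.lt_succ_of_le (le_natDegree_of_ne_zero hn0))
  have heval : Q.eval t = Q.coeff n * t ^ n +
      ∑ i ∈ (Finset.range (Q.natDegree + 1)).erase n, Q.coeff i * t ^ i := by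
    rw [eval_eq_sum_range]
    exact (Finset.add_sum_erase _ _ hmem).symm
  have hane : Q.coeff n * t ^ n ≠ 0 := mul_ne_zero hn0 (pow_ne_zero _ ht)
  have ha : val (Q.coeff n * t ^ n) = n * v := by
    rw [hm _ _ hn0 (pow_ne_zero _ ht), hvn, val_pow' val hm ht, hvt]; ring
  have hterm : ∀ i ∈ (Finset.range (Q.natDegree + 1)).erase n,
      Q.coeff i * t ^ i = 0 ∨ ((n : ℝ) + 1) * v ≤ val (Q.coeff i * t ^ i) := by
    intro i hi'
    have hin : i ≠ n := (Finset.mem_erase.1 hi').1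
    rcases lt_or_gt_of_ne hin with h | h
    · left; rw [hlow i h, zero_mul]
    · by_cases hc : Q.coeff i = 0
      · left; rw [hc, zero_mul]
      · right
        have hval : val (Q.coeff i * t ^ i) = val (Q.coeff i) + i * v := by
          rw [hm _ _ hc (pow_ne_zero _ ht), val_pow' val hm ht, hvt]
        have h1 : 0 ≤ val (Q.coeff i) := (hnn i).resolve_left hc
        have h2 : ((n : ℝ) + 1) ≤ (i : ℝ) := by exact_mod_cast h
        nlinarith
  rcases val_sum_ge' val ha' (((n : ℝ) + 1) * v) _ _ hterm with hr0 | hrge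
  · rw [heval, hr0, add_zero]; exact ⟨hane, ha⟩
  · by_cases hr0' : (∑ i ∈ (Finset.range (Q.natDegree + 1)).erase n, Q.coeff i * t ^ i) = 0
    · rw [heval, hr0', add_zero]; exact ⟨hane, ha⟩
    · have hlt : val (Q.coeff n * t ^ n) <
          val (∑ i ∈ (Finset.range (Q.natDegree + 1)).erase n, Q.coeff i * t ^ i) := by
        rw [ha]
        have : (n : ℝ) * v < ((n : ℝ) + 1) * v := by nlinarith
        linarith
      obtain ⟨hne, hval⟩ := val_add_of_lt' val hm ha' hi hane hr0' hlt
      rw [heval]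
      exact ⟨hne, by rw [hval, ha]⟩

end ValAux


section Master
variable {𝕂 : Type*} [Field 𝕂] [CharZero 𝕂]

lemma main_val (val : 𝕂 → ℝ)
    (hm : ∀ a b : 𝕂, a ≠ 0 → b ≠ 0 → val (a * b) = val a + val b)
    (ha' : ∀ a b : 𝕂, a ≠ 0 → b ≠ 0 → a + b ≠ 0 → min (val a) (val b) ≤ val (a + b))
    (hi : ∀ m : ℤ, m ≠ 0 → val ((m : ℤ) : 𝕂) = 0)
    {g : ℕ} (hg : 0 < g) {β : 𝕂} (hβg : β ^ g = 1)
    {b : 𝕂} {v : ℝ} (hv : 0 < v) (hbβ : b ≠ β) (hvb : val (b - β) = v)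
    (p q r s : ℕ) (hpq : p ≠ q) (hpr : p ≠ r) (hps : p ≠ s)
    (hqr : q ≠ r) (hqs : q ≠ s) (hrs : r ≠ s)
    (hq : β ^ q = β ^ p) (hr : β ^ r = β ^ p) :
    (Polynomial.aeval b (Dfour p q r s) ≠ 0) ∧
      (β ^ s = β ^ p → val (Polynomial.aeval b (Dfour p q r s)) = 4 * v) ∧
      (β ^ s ≠ β ^ p → val (Polynomial.aeval b (Dfour p q r s)) = v) := by
  obtain ⟨hβ0, hvβ⟩ := val_root_of_unity val hm hg hβg
  set t := b - β with hT
  have ht0 : t ≠ 0 := sub_ne_zero.2 hbβ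
  set w := β ^ p with hw
  set w' := β ^ s with hw'
  have hw0 : w ≠ 0 := pow_ne_zero _ hβ0
  have hw'0 : w' ≠ 0 := pow_ne_zero _ hβ0
  have hvw : val w = 0 := by rw [hw, val_pow' val hm hβ0, hvβ, mul_zero]
  have hvw' : val w' = 0 := by rw [hw', val_pow' val hm hβ0, hvβ, mul_zero]
  obtain ⟨hdqp0, hdqpv⟩ := val_diff_nat val hi (show q ≠ p from hpq.symm)
  obtain ⟨hdsr0, hdsrv⟩ := val_diff_nat val hi (show s ≠ r from hrs.symm)
  obtain ⟨hdrp0, hdrpv⟩ := val_diff_nat val hi (show r ≠ p from hpr.symm)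
  obtain ⟨hdsq0, hdsqv⟩ := val_diff_nat val hi (show s ≠ q from hqs.symm)
  obtain ⟨hdsp0, hdspv⟩ := val_diff_nat val hi (show s ≠ p from hps.symm)
  obtain ⟨hdrq0, hdrqv⟩ := val_diff_nat val hi (show r ≠ q from hqr.symm)
  set c1 : 𝕂 := ((q:𝕂) - (p:𝕂)) * ((s:𝕂) - (r:𝕂)) with hc1
  set c2 : 𝕂 := -(((r:𝕂) - (p:𝕂)) * ((s:𝕂) - (q:𝕂))) with hc2
  set c3 : 𝕂 := ((s:𝕂) - (p:𝕂)) * ((r:𝕂) - (q:𝕂)) with hc3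
  obtain ⟨hc10, hc1v⟩ : c1 ≠ 0 ∧ val c1 = 0 := by
    rw [hc1]; exact val_mul₀ val hm hdqp0 hdsr0 hdqpv hdsrv
  obtain ⟨hc20, hc2v⟩ : c2 ≠ 0 ∧ val c2 = 0 := by
    rw [hc2]
    obtain ⟨h1, h2⟩ := val_mul₀ val hm hdrp0 hdsq0 hdrpv hdsqv
    exact ⟨neg_ne_zero.2 h1, by rw [val_neg' val hm hi h1]; exact h2⟩
  obtain ⟨hc30, hc3v⟩ : c3 ≠ 0 ∧ val c3 = 0 := by
    rw [hc3]; exact val_mul₀ val hm hdsp0 hdrq0 hdspv hdrqv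
  obtain ⟨hww0, hwwv⟩ : w * w ≠ 0 ∧ val (w * w) = 0 := val_mul₀ val hm hw0 hw0 hvw hvw
  obtain ⟨hww'0, hww'v⟩ : w * w' ≠ 0 ∧ val (w * w') = 0 := val_mul₀ val hm hw0 hw'0 hvw hvw'
  have hP : (Dfour p q r s).map (algebraMap ℤ 𝕂)
      = C c1 * X ^ (p+q) + C c1 * X ^ (r+s) + C c2 * X ^ (p+r) + C c2 * X ^ (q+s)
        + C c3 * X ^ (p+s) + C c3 * X ^ (q+r) := by
    rw [Dfour_formula]
    rw [hc1, hc2, hc3]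
    simp only [Polynomial.map_add, Polynomial.map_sub, Polynomial.map_mul, Polynomial.map_pow,
      Polynomial.map_natCast, Polynomial.map_X, map_mul, map_sub, map_neg, Polynomial.C_eq_natCast]
    push_cast
    ring
  set Q := taylor β ((Dfour p q r s).map (algebraMap ℤ 𝕂)) with hQ
  have heval : (Polynomial.aeval b (Dfour p q r s)) = Q.eval t := by
    rw [hQ, taylor_eval, hT, sub_add_cancel, eval_map, aeval_def]
  have hQc : ∀ k, β ^ k * Q.coeff k
      = c1 * (((p+q).choose k : ℕ) : 𝕂) * (w * w) + c1 * (((r+s).choose k : ℕ) : 𝕂) * (w * w')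
      + c2 * (((p+r).choose k : ℕ) : 𝕂) * (w * w) + c2 * (((q+s).choose k : ℕ) : 𝕂) * (w * w')
      + c3 * (((p+s).choose k : ℕ) : 𝕂) * (w * w') + c3 * (((q+r).choose k : ℕ) : 𝕂) * (w * w) := by
    intro k
    rw [hQ, hP]
    rw [map_add, map_add, map_add, map_add, map_add]
    simp only [coeff_add, mul_add]
    rw [pow_mul_taylor_coeff_monomial hβ0, pow_mul_taylor_coeff_monomial hβ0,
      pow_mul_taylor_coeff_monomial hβ0, pow_mul_taylor_coeff_monomial hβ0,
      pow_mul_taylor_coeff_monomial hβ0, pow_mul_taylor_coeff_monomial hβ0]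
    simp only [pow_add, hq, hr, ← hw, ← hw']
    try ring
  -- coefficient 0 always vanishes
  have h0 : Q.coeff 0 = 0 := by
    have h : β ^ 0 * Q.coeff 0 = 0 := by
      rw [hQc 0, hc1, hc2, hc3]; simp only [Nat.choose_zero_right, Nat.cast_one]; ring
    simpa using h
  -- nonnegativity of all coefficient valuations
  have hnn : ∀ k, Q.coeff k = 0 ∨ 0 ≤ val (Q.coeff k) := by
    intro k
    by_cases h0' : Q.coeff k = 0
    · exact Or.inl h0'
    right
    have hβk : (β : 𝕂) ^ k ≠ 0 := pow_ne_zero _ hβ0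
    have hQk0 : β ^ k * Q.coeff k ≠ 0 := mul_ne_zero hβk h0'
    have hval : val (β ^ k * Q.coeff k) = val (Q.coeff k) := by
      rw [hm _ _ hβk h0', val_pow' val hm hβ0, hvβ]; ring
    rw [← hval]
    have hterm : ∀ (c z : 𝕂), c ≠ 0 → val c = 0 → z ≠ 0 → val z = 0 → ∀ n : ℕ,
        (c * ((n.choose k : ℕ) : 𝕂) * z = 0 ∨ (0:ℝ) ≤ val (c * ((n.choose k : ℕ) : 𝕂) * z)) := by
      intro c z hc hvc hz hvz n
      by_cases hch : n.choose k = 0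
      · left; rw [hch]; simp
      · right
        have hchK : ((n.choose k : ℕ) : 𝕂) ≠ 0 := Nat.cast_ne_zero.2 hch
        have hvch : val ((n.choose k : ℕ) : 𝕂) = 0 := by
          have hcast : ((n.choose k : ℕ) : 𝕂) = (((n.choose k : ℕ) : ℤ) : 𝕂) := by push_cast; ring
          rw [hcast]; exact hi _ (by exact_mod_cast hch)
        obtain ⟨hmm, hvv⟩ := val_mul₀ val hm (mul_ne_zero hc hchK) hz
          (by obtain ⟨_, h⟩ := val_mul₀ val hm hc hchK hvc hvch; exact h) hvz
        rw [hvv]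
    have hsum := val_add_ge' val ha' (0:ℝ)
      (val_add_ge' val ha' (0:ℝ)
        (val_add_ge' val ha' (0:ℝ)
          (val_add_ge' val ha' (0:ℝ)
            (val_add_ge' val ha' (0:ℝ)
              (hterm c1 (w*w) hc10 hc1v hww0 hwwv (p+q))
              (hterm c1 (w*w') hc10 hc1v hww'0 hww'v (r+s)))
            (hterm c2 (w*w) hc20 hc2v hww0 hwwv (p+r)))
          (hterm c2 (w*w') hc20 hc2v hww'0 hww'v (q+s)))
        (hterm c3 (w*w') hc30 hc3v hww'0 hww'v (p+s)))
      (hterm c3 (w*w) hc30 hc3v hww0 hwwv (q+r))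
    rw [← hQc k] at hsum
    exact hsum.resolve_left hQk0
  by_cases hws : β ^ s = β ^ p
  · -- CASE A : w' = w, order 4 vanishing
    rw [← hw, ← hw'] at hws
    have h1 : Q.coeff 1 = 0 := by
      have h : β ^ 1 * Q.coeff 1 = 0 := by
        rw [hQc 1, hws, hc1, hc2, hc3]
        simp only [Nat.choose_one_right]
        push_cast; ring
      have := (mul_eq_zero.mp h).resolve_left (pow_ne_zero 1 hβ0)
      exact this
    have h2 : Q.coeff 2 = 0 := by
      have h : β ^ 2 * Q.coeff 2 = 0 := by
        rw [hQc 2, hws, hc1, hc2, hc3]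
        simp only [cast_choose_eq, Finset.prod_range_succ, Finset.prod_range_zero, one_mul]
        norm_num [Nat.factorial]
        push_cast; ring
      exact (mul_eq_zero.mp h).resolve_left (pow_ne_zero 2 hβ0)
    have h3 : Q.coeff 3 = 0 := by
      have h : β ^ 3 * Q.coeff 3 = 0 := by
        rw [hQc 3, hws, hc1, hc2, hc3]
        simp only [cast_choose_eq, Finset.prod_range_succ, Finset.prod_range_zero, one_mul]
        norm_num [Nat.factorial]
        push_cast; ring
      exact (mul_eq_zero.mp h).resolve_left (pow_ne_zero 3 hβ0)
    have h4 : β ^ 4 * Q.coeff 4 = w * w *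
        (((q:𝕂)-(p:𝕂)) * (((r:𝕂)-(p:𝕂)) * (((s:𝕂)-(p:𝕂)) * (((r:𝕂)-(q:𝕂)) *
          (((s:𝕂)-(q:𝕂)) * ((s:𝕂)-(r:𝕂))))))) * ((12:𝕂))⁻¹ := by
      rw [hQc 4, hws, hc1, hc2, hc3]
      simp only [cast_choose_eq, Finset.prod_range_succ, Finset.prod_range_zero, one_mul]
      norm_num [Nat.factorial]
      push_cast; ring
    -- value of coefficient 4
    have hA1 := val_mul₀ val hm hdsq0 hdsr0 hdsqv hdsrv
    have hA2 := val_mul₀ val hm hdrq0 hA1.1 hdrqv hA1.2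
    have hA3 := val_mul₀ val hm hdsp0 hA2.1 hdspv hA2.2
    have hA4 := val_mul₀ val hm hdrp0 hA3.1 hdrpv hA3.2
    have hA5 := val_mul₀ val hm hdqp0 hA4.1 hdqpv hA4.2
    obtain ⟨hV0, hVv⟩ := hA5
    have h12 : ((12:𝕂))⁻¹ ≠ 0 ∧ val (((12:𝕂))⁻¹) = 0 := by
      constructor
      · exact inv_ne_zero (by norm_num)
      · rw [val_inv' val hm (by norm_num : (12:𝕂) ≠ 0)]
        have : (12:𝕂) = ((12:ℤ):𝕂) := by norm_num
        rw [this, hi 12 (by norm_num)]; ring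
    have hrhs0 : w * w * (((q:𝕂)-(p:𝕂)) * (((r:𝕂)-(p:𝕂)) * (((s:𝕂)-(p:𝕂)) * (((r:𝕂)-(q:𝕂)) *
          (((s:𝕂)-(q:𝕂)) * ((s:𝕂)-(r:𝕂))))))) * ((12:𝕂))⁻¹ ≠ 0 :=
      mul_ne_zero (mul_ne_zero hww0 hV0) h12.1
    have hrhsv : val (w * w * (((q:𝕂)-(p:𝕂)) * (((r:𝕂)-(p:𝕂)) * (((s:𝕂)-(p:𝕂)) * (((r:𝕂)-(q:𝕂)) *
          (((s:𝕂)-(q:𝕂)) * ((s:𝕂)-(r:𝕂))))))) * ((12:𝕂))⁻¹) = 0 :=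
      (val_mul₀ val hm (mul_ne_zero hww0 hV0) h12.1
        ((val_mul₀ val hm hww0 hV0 hwwv hVv).2) h12.2).2
    have hc40 : Q.coeff 4 ≠ 0 := by
      intro h
      rw [h, mul_zero] at h4
      exact hrhs0 h4.symm
    have hc4v : val (Q.coeff 4) = 0 := by
      have hβ4 : (β:𝕂)^4 ≠ 0 := pow_ne_zero _ hβ0
      have := hm _ _ hβ4 hc40
      rw [h4] at this
      rw [val_pow' val hm hβ0, hvβ] at this
      rw [hrhsv] at this
      linarith
    have hlow : ∀ k, k < 4 → Q.coeff k = 0 := by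
      intro k hk
      interval_cases k
      · exact h0
      · exact h1
      · exact h2
      · exact h3
    obtain ⟨hne, hvQ⟩ := val_poly_eval val hm ha' hi Q ht0 hv hvb 4 hlow hc40 hc4v hnn
    rw [heval]
    refine ⟨hne, fun _ => ?_, fun hcon => absurd hws hcon⟩
    rw [hvQ]; norm_num
  · -- CASE B : w' ≠ w, order 1 vanishing
    rw [← hw, ← hw'] at hws
    have hwne : w - w' ≠ 0 := sub_ne_zero.2 (Ne.symm hws)
    have hvwd : val (w - w') = 0 := by
      rcases Nat.lt_or_ge p s with hlt | hge
      · have hs : β ^ s = β ^ p * β ^ (s - p) := by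
          rw [← pow_add, Nat.add_sub_cancel' hlt.le]
        have hne1 : β ^ (s - p) ≠ 1 := by
          intro h1; apply hws; rw [hw', hw, hs, h1, mul_one]
        have hd : w - w' = -(w * (β ^ (s-p) - 1)) := by
          rw [hw, hw', hs]; ring
        rw [hd, val_neg' val hm hi (mul_ne_zero hw0 (sub_ne_zero.2 hne1))]
        exact (val_mul₀ val hm hw0 (sub_ne_zero.2 hne1) hvw
          (val_pow_sub_one val hm ha' hi hg hβg _ hne1)).2
      · have hlt : s < p := lt_of_le_of_ne hge (Ne.symm hps)
        have hs : β ^ p = β ^ s * β ^ (p - s) := by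
          rw [← pow_add, Nat.add_sub_cancel' hlt.le]
        have hne1 : β ^ (p - s) ≠ 1 := by
          intro h1; apply hws; rw [hw', hw, hs, h1, mul_one]
        have hd : w - w' = w' * (β ^ (p-s) - 1) := by
          rw [hw, hw', hs]; ring
        rw [hd]
        exact (val_mul₀ val hm hw'0 (sub_ne_zero.2 hne1) hvw'
          (val_pow_sub_one val hm ha' hi hg hβg _ hne1)).2
    have h1B : β ^ 1 * Q.coeff 1 = w * (w - w') *
        (((q:𝕂)-(p:𝕂)) * (((r:𝕂)-(p:𝕂)) * ((r:𝕂)-(q:𝕂)))) := by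
      rw [hQc 1, hc1, hc2, hc3]
      simp only [Nat.choose_one_right]
      push_cast; ring
    obtain ⟨hV30, hV3v⟩ : (((q:𝕂)-(p:𝕂)) * (((r:𝕂)-(p:𝕂)) * ((r:𝕂)-(q:𝕂)))) ≠ 0 ∧
        val (((q:𝕂)-(p:𝕂)) * (((r:𝕂)-(p:𝕂)) * ((r:𝕂)-(q:𝕂)))) = 0 := by
      apply val_mul₀ val hm hdqp0 (mul_ne_zero hdrp0 hdrq0) hdqpv
      exact (val_mul₀ val hm hdrp0 hdrq0 hdrpv hdrqv).2
    have hrhs0 : w * (w - w') * (((q:𝕂)-(p:𝕂)) * (((r:𝕂)-(p:𝕂)) * ((r:𝕂)-(q:𝕂)))) ≠ 0 :=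
      mul_ne_zero (mul_ne_zero hw0 hwne) hV30
    have hrhsv : val (w * (w - w') * (((q:𝕂)-(p:𝕂)) * (((r:𝕂)-(p:𝕂)) * ((r:𝕂)-(q:𝕂))))) = 0 :=
      (val_mul₀ val hm (mul_ne_zero hw0 hwne) hV30
        ((val_mul₀ val hm hw0 hwne hvw hvwd).2) hV3v).2
    have hc10' : Q.coeff 1 ≠ 0 := by
      intro h
      rw [h, mul_zero] at h1B
      exact hrhs0 h1B.symm
    have hc1v' : val (Q.coeff 1) = 0 := by
      have hβ1 : (β:𝕂)^1 ≠ 0 := pow_ne_zero _ hβ0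
      have := hm _ _ hβ1 hc10'
      rw [h1B] at this
      rw [val_pow' val hm hβ0, hvβ] at this
      rw [hrhsv] at this
      linarith
    have hlow : ∀ k, k < 1 → Q.coeff k = 0 := by
      intro k hk
      interval_cases k
      exact h0
    obtain ⟨hne, hvQ⟩ := val_poly_eval val hm ha' hi Q ht0 hv hvb 1 hlow hc10' hc1v' hnn
    rw [heval]
    refine ⟨hne, fun hcon => absurd hcon hws, fun _ => ?_⟩
    rw [hvQ]; norm_num

end Master


lemma sort_four {a b c d : ℕ} (hab : a < b) (hbc : b < c) (hcd : c < d) :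
    ({a, b, c, d} : Finset ℕ).sort (· ≤ ·) = [a, b, c, d] := by
  rw [show ({a,b,c,d} : Finset ℕ) = insert a (insert b (insert c {d})) from rfl]
  rw [Finset.sort_insert (r := (· ≤ ·)) (fun x hx => by
        simp at hx; rcases hx with rfl | rfl | rfl <;> omega)
      (by simp; omega)]
  rw [Finset.sort_insert (r := (· ≤ ·)) (fun x hx => by
        simp at hx; rcases hx with rfl | rfl <;> omega)
      (by simp; omega)]
  rw [Finset.sort_insert (r := (· ≤ ·)) (fun x hx => by
        simp at hx; omega)
      (by simp; omega)]
  rw [Finset.sort_singleton]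


/-- 𝕂 is algebraically closed of characteristic zero with a rank-one
(real-valued) valuation `val` on `𝕂*` which vanishes on nonzero integers. For
`J = {i₁,i₂,i₃,i₄}` with `i₁ < i₂ < i₃`, `i₄ ∉ {i₁,i₂,i₃}`, `g = gcd(i₃−i₁,i₂−i₁) > 1`,
a root of unity `β ≠ 1` with `β^g = 1` and `b` with `val(b − β) = v > 0`:
`val(D_J(b)) = 4v` if `β^{i₄} = β^{i₁}` and `val(D_J(b)) = v` otherwise. -/
theorem val_DJ_eval (𝕂 : Type*) [Field 𝕂] [IsAlgClosed 𝕂] [CharZero 𝕂]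
    (val : 𝕂 → ℝ)
    (hval_mul : ∀ a b : 𝕂, a ≠ 0 → b ≠ 0 → val (a * b) = val a + val b)
    (hval_add : ∀ a b : 𝕂, a ≠ 0 → b ≠ 0 → a + b ≠ 0 → min (val a) (val b) ≤ val (a + b))
    (hval_int : ∀ m : ℤ, m ≠ 0 → val (m : 𝕂) = 0)
    (i₁ i₂ i₃ i₄ : ℕ) (h₁₂ : i₁ < i₂) (h₂₃ : i₂ < i₃)
    (h₄₁ : i₄ ≠ i₁) (h₄₂ : i₄ ≠ i₂) (h₄₃ : i₄ ≠ i₃)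
    (hg : 1 < Nat.gcd (i₃ - i₁) (i₂ - i₁))
    (β : 𝕂) (hβ1 : β ≠ 1) (hβg : β ^ Nat.gcd (i₃ - i₁) (i₂ - i₁) = 1)
    (b : 𝕂) (v : ℝ) (hv : 0 < v) (hbβ : b ≠ β) (hval_b : val (b - β) = v) :
    Polynomial.aeval b (DJ ({i₁, i₂, i₃, i₄} : Finset ℕ)) ≠ 0 ∧
    ((β ^ i₄ = β ^ i₁ →
        val (Polynomial.aeval b (DJ ({i₁, i₂, i₃, i₄} : Finset ℕ))) = 4 * v) ∧
     (β ^ i₄ ≠ β ^ i₁ →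
        val (Polynomial.aeval b (DJ ({i₁, i₂, i₃, i₄} : Finset ℕ))) = v)) := by
  set g := Nat.gcd (i₃ - i₁) (i₂ - i₁) with hgdef
  have hg0 : 0 < g := lt_trans one_pos hg
  -- the three powers agree
  have hpow : ∀ m n : ℕ, m ≤ n → g ∣ (n - m) → β ^ n = β ^ m := by
    intro m n hmn ⟨c, hc⟩
    have h' : n = m + (n - m) := (Nat.add_sub_cancel' hmn).symm
    rw [h', pow_add, hc, pow_mul, hβg, one_pow, mul_one]
  have hq : β ^ i₂ = β ^ i₁ := hpow i₁ i₂ h₁₂.le (Nat.gcd_dvd_right _ _)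
  have hr : β ^ i₃ = β ^ i₁ := hpow i₁ i₃ (h₁₂.trans h₂₃).le (Nat.gcd_dvd_left _ _)
  have hmain := main_val val hval_mul hval_add hval_int hg0 hβg hv hbβ hval_b
    i₁ i₂ i₃ i₄ h₁₂.ne (h₁₂.trans h₂₃).ne (Ne.symm h₄₁) h₂₃.ne (Ne.symm h₄₂) (Ne.symm h₄₃) hq hr
  obtain ⟨hne, hA, hB⟩ := hmain
  -- case analysis on the position of i₄
  have hval_neg : ∀ x : 𝕂, x ≠ 0 → val (-x) = val x := fun x hx =>
    val_neg' val hval_mul hval_int hx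
  rcases Nat.lt_or_ge i₄ i₁ with hp1 | hge1
  · -- i₄ < i₁ : sorted [i₄, i₁, i₂, i₃]
    have hset : ({i₁, i₂, i₃, i₄} : Finset ℕ) = {i₄, i₁, i₂, i₃} := by
      ext x; simp; tauto
    have hsort : ({i₁, i₂, i₃, i₄} : Finset ℕ).sort (· ≤ ·) = [i₄, i₁, i₂, i₃] := by
      rw [hset]; exact sort_four hp1 h₁₂ h₂₃
    have hDJ : DJ ({i₁, i₂, i₃, i₄} : Finset ℕ) = Dfour i₄ i₁ i₂ i₃ := by
      unfold DJ; rw [hsort]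
    rw [hDJ, Dfour_perm_first, map_neg]
    refine ⟨neg_ne_zero.2 hne, fun h => ?_, fun h => ?_⟩
    · rw [hval_neg _ hne]; exact hA h
    · rw [hval_neg _ hne]; exact hB h
  rcases Nat.lt_or_ge i₄ i₂ with hp2 | hge2
  · -- i₁ < i₄ < i₂ : sorted [i₁, i₄, i₂, i₃]
    have hlt1 : i₁ < i₄ := lt_of_le_of_ne hge1 (Ne.symm h₄₁)
    have hset : ({i₁, i₂, i₃, i₄} : Finset ℕ) = {i₁, i₄, i₂, i₃} := by
      ext x; simp; tauto
    have hsort : ({i₁, i₂, i₃, i₄} : Finset ℕ).sort (· ≤ ·) = [i₁, i₄, i₂, i₃] := by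
      rw [hset]; exact sort_four hlt1 hp2 h₂₃
    have hDJ : DJ ({i₁, i₂, i₃, i₄} : Finset ℕ) = Dfour i₁ i₄ i₂ i₃ := by
      unfold DJ; rw [hsort]
    rw [hDJ, Dfour_perm_mid]
    exact ⟨hne, hA, hB⟩
  rcases Nat.lt_or_ge i₄ i₃ with hp3 | hge3
  · -- i₂ < i₄ < i₃ : sorted [i₁, i₂, i₄, i₃]
    have hlt2 : i₂ < i₄ := lt_of_le_of_ne hge2 (Ne.symm h₄₂)
    have hset : ({i₁, i₂, i₃, i₄} : Finset ℕ) = {i₁, i₂, i₄, i₃} := by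
      ext x; simp; tauto
    have hsort : ({i₁, i₂, i₃, i₄} : Finset ℕ).sort (· ≤ ·) = [i₁, i₂, i₄, i₃] := by
      rw [hset]; exact sort_four h₁₂ hlt2 hp3
    have hDJ : DJ ({i₁, i₂, i₃, i₄} : Finset ℕ) = Dfour i₁ i₂ i₄ i₃ := by
      unfold DJ; rw [hsort]
    rw [hDJ, Dfour_perm_last, map_neg]
    refine ⟨neg_ne_zero.2 hne, fun h => ?_, fun h => ?_⟩
    · rw [hval_neg _ hne]; exact hA h
    · rw [hval_neg _ hne]; exact hB h
  · -- i₃ < i₄ : sorted [i₁, i₂, i₃, i₄]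
    have hlt3 : i₃ < i₄ := lt_of_le_of_ne hge3 (Ne.symm h₄₃)
    have hsort : ({i₁, i₂, i₃, i₄} : Finset ℕ).sort (· ≤ ·) = [i₁, i₂, i₃, i₄] :=
      sort_four h₁₂ h₂₃ hlt3
    have hDJ : DJ ({i₁, i₂, i₃, i₄} : Finset ℕ) = Dfour i₁ i₂ i₃ i₄ := by
      unfold DJ; rw [hsort]
    rw [hDJ]
    exact ⟨hne, hA, hB⟩
end

section
/- Let K be an algebraically closed field of characteristic zero, let β ∈ K with β ≠ 0, and let J = {i₁,i₂,i₃,i₄,i₅} be a set of five pairwise distinct natural numbers. Suppose D_{J∖{i₅}}(β) = 0 and that it is NOT the case that exactly three of the four values β^{i₁}, β^{i₂}, β^{i₃}, β^{i₄} are equal to a common value with the remaining one different. Then either D_{J∖{i_j}}(β) = 0 for all j ∈ {1,2,3,4,5}, or D_{J∖{i_j}}(β) ≠ 0 for all j ∈ {1,2,3,4}. -/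
/-!
Write `v i = (1, i, β^i, i β^i)` for the column of `𝐌` at exponent `i`, so that `D_S(β) = 0`
exactly when the columns indexed by `S` are linearly dependent. Three columns are dependent only
if their powers `β^i` coincide, since in characteristic zero the entries `(1, i)` already separate
them. If `β^{i₁} = ⋯ = β^{i₄} = t`, the columns `v i₁, …, v i₄` lie in the plane
`{(x, y, t x, t y)}`, so every four of the five columns are dependent. Otherwise every three of
`v i₁, …, v i₄` are independent, and by hypothesis all four span a subspace `W` of dimension 3:
if `v i₅ ∈ W` every four of the five columns are dependent, and if `v i₅ ∉ W` each independent
triple stays independent after adding `v i₅`.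
-/

open Polynomial

section LinearAlgebra

variable {K V ι : Type*} [Field K] [AddCommGroup V] [Module K V] {v : ι → V}

theorem linearIndepOn_finset_iff_card_le_finrank_span {s : Finset ι} :
    LinearIndepOn K v s ↔ s.card ≤ (v '' s).finrank K := by
  rw [LinearIndepOn, linearIndependent_iff_card_le_finrank_span, Set.image_eq_range]
  simp

variable [DecidableEq ι]

theorem not_linearIndepOn_erase_insert {T : Finset ι} {a : ι} (haT : a ∉ T)
    (hT : ¬ LinearIndepOn K v T) (ha : v a ∈ Submodule.span K (v '' T)) {j : ι}
    (hj : j ∈ insert a T) : ¬ LinearIndepOn K v ((insert a T).erase j) := by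
  intro hind
  have hspan : Submodule.span K (v '' ((insert a T).erase j : Finset ι))
      ≤ Submodule.span K (v '' T) := by
    rw [← Submodule.span_insert_eq_span ha, ← Set.image_insert_eq, ← Finset.coe_insert]
    exact Submodule.span_mono (Set.image_mono (Finset.coe_subset.2 (Finset.erase_subset _ _)))
  refine hT (linearIndepOn_finset_iff_card_le_finrank_span.2 ?_)
  calc T.card = ((insert a T).erase j).card := by
        rw [Finset.card_erase_of_mem hj, Finset.card_insert_of_notMem haT, Nat.add_sub_cancel]
    _ ≤ (v '' ((insert a T).erase j : Finset ι)).finrank K :=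
        linearIndepOn_finset_iff_card_le_finrank_span.1 hind
    _ ≤ (v '' T).finrank K :=
        have := Module.Finite.span_of_finite K ((T.finite_toSet).image v)
        Submodule.finrank_mono hspan

theorem linearIndepOn_erase_insert {T : Finset ι} {a : ι} (haT : a ∉ T)
    (ha : v a ∉ Submodule.span K (v '' T)) {j : ι} (hj : j ∈ T)
    (hTj : LinearIndepOn K v (T.erase j)) :
    LinearIndepOn K v ((insert a T).erase j) := by
  rw [Finset.erase_insert_of_ne (by rintro rfl; exact haT hj), Finset.coe_insert,
    linearIndepOn_insert (by simp [haT])]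
  exact ⟨hTj, fun h => ha (Submodule.span_mono (Set.image_mono (by simp)) h)⟩

end LinearAlgebra

namespace DJ

variable {K : Type*} [Field K]

def column (β : K) (i : ℕ) : Fin 4 → K := ![1, i, β ^ i, i * β ^ i]

theorem aeval_Dfour (β : K) (a b c d : ℕ) :
    aeval β (Dfour a b c d) = (Matrix.of fun r j => column β (![a, b, c, d] j) r).det := by
  rw [Dfour, AlgHom.map_det]
  congr 1
  ext r j
  fin_cases r <;> simp [column]

theorem aeval_eq_zero_iff (β : K) {S : Finset ℕ} (hS : S.card = 4) :
    aeval β (DJ S) = 0 ↔ ¬ LinearIndepOn K (column β) (S : Set ℕ) := by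
  obtain ⟨a, b, c, d, hL⟩ := List.length_eq_four.1 (S.length_sort (· ≤ ·) ▸ hS)
  have hsort : ![a, b, c, d] = S.orderEmbOfFin hS := by
    funext j
    fin_cases j <;> simp [Finset.orderEmbOfFin_apply, hL]
  rw [DJ, hL, aeval_Dfour, hsort, ← Finset.range_orderEmbOfFin S hS,
    linearIndepOn_range_iff (S.orderEmbOfFin hS).injective, ← not_iff_not, not_not,
    ← Ne, ← isUnit_iff_ne_zero, ← Matrix.isUnit_iff_isUnit_det,
    ← Matrix.linearIndependent_cols_iff_isUnit]
  rfl

theorem card_le_two_of_linearIndepOn_column {β t : K} {s : Finset ℕ}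
    (hs : LinearIndepOn K (column β) s) (ht : ∀ i ∈ s, β ^ i = t) : s.card ≤ 2 := by
  let L : (Fin 2 → K) →ₗ[K] (Fin 4 → K) :=
    { toFun := fun x => ![x 0, x 1, t * x 0, t * x 1]
      map_add' := fun x y => by ext r; fin_cases r <;> simp <;> ring
      map_smul' := fun c x => by ext r; fin_cases r <;> simp <;> ring }
  have hcol : Set.EqOn (column β) (L ∘ fun i => ![1, (i : K)]) s := fun i hi => by
    ext r; fin_cases r <;> simp [L, column, ht i hi, mul_comm]
  simpa using ((hs.congr hcol).of_comp L).fintype_card_le_finrank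

theorem pow_eq_of_not_linearIndependent_column [CharZero K] {β : K} {a b c : ℕ}
    (hab : a ≠ b) (hac : a ≠ c) (hbc : b ≠ c)
    (h : ¬ LinearIndependent K ![column β a, column β b, column β c]) :
    β ^ a = β ^ c ∧ β ^ b = β ^ c := by
  have hAB : (a : K) ≠ b := Nat.cast_injective.ne hab
  have hAC : (a : K) ≠ c := Nat.cast_injective.ne hac
  have hBC : (b : K) ≠ c := Nat.cast_injective.ne hbc
  obtain ⟨g, hsum, i, hi⟩ := Fintype.not_linearIndependent_iff.1 h
  have hcoord (r : Fin 4) := congrFun hsum r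
  simp only [Fin.sum_univ_three, Finset.sum_apply, Pi.smul_apply] at hcoord
  have e0 := hcoord 0
  have e1 := hcoord 1
  have e2 := hcoord 2
  have e3 := hcoord 3
  simp only [column, Matrix.cons_val, smul_eq_mul, mul_one, Pi.zero_apply] at e0 e1 e2 e3
  have hg2 : g 2 ≠ 0 := by
    intro h2
    have h0 : g 0 = 0 := (mul_eq_zero.1 (by linear_combination e1 - b * e0 + (b - c) * h2 :
      g 0 * ((a : K) - b) = 0)).resolve_right (sub_ne_zero.2 hAB)
    have h1 : g 1 = 0 := by linear_combination e0 - h0 - h2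
    fin_cases i <;> simp_all
  -- eliminate `g 0` and `g 1` from the four coordinate equations
  have k1 : g 2 * (((c : K) - b) * (β ^ c - β ^ a)) = 0 := by
    linear_combination e3 - b * e2 - β ^ a * e1 + b * β ^ a * e0
  have k2 : g 2 * (((c : K) - a) * (β ^ c - β ^ b)) = 0 := by
    linear_combination e3 - a * e2 - β ^ b * e1 + a * β ^ b * e0
  simp only [mul_eq_zero, hg2, sub_eq_zero, hAC.symm, hBC.symm, false_or] at k1 k2
  exact ⟨k1.symm, k2.symm⟩

theorem exists_pow_eq_of_not_linearIndepOn_column [CharZero K] {β : K} {s : Finset ℕ}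
    (hs : s.card = 3) (h : ¬ LinearIndepOn K (column β) s) : ∃ t, ∀ i ∈ s, β ^ i = t := by
  obtain ⟨a, b, c, hab, hac, hbc, rfl⟩ := Finset.card_eq_three.1 hs
  have hinj : Function.Injective ![a, b, c] := by
    intro x y; fin_cases x <;> fin_cases y <;> simp [hab, hac, hbc, hab.symm, hac.symm, hbc.symm]
  have hcomp : column β ∘ ![a, b, c] = ![column β a, column β b, column β c] := by
    ext i; fin_cases i <;> rfl
  rw [show (({a, b, c} : Finset ℕ) : Set ℕ) = Set.range ![a, b, c] by
      ext; simp [Matrix.range_cons, or_comm, or_left_comm],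
    linearIndepOn_range_iff hinj, hcomp] at h
  obtain ⟨hac', hbc'⟩ := pow_eq_of_not_linearIndependent_column hab hac hbc h
  exact ⟨β ^ c, by simp [hac', hbc']⟩

theorem forall_not_linearIndepOn_erase_or_forall_linearIndepOn_erase [CharZero K] {β : K}
    {T : Finset ℕ} {a : ℕ} (hT4 : T.card = 4) (haT : a ∉ T)
    (hT : ¬ LinearIndepOn K (column β) T)
    (hpow : (∃ t, ∀ i ∈ T, β ^ i = t) ∨ ∀ j ∈ T, ¬ ∃ t, ∀ i ∈ T.erase j, β ^ i = t) :
    (∀ j ∈ insert a T, ¬ LinearIndepOn K (column β) ((insert a T).erase j : Finset ℕ)) ∨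
      ∀ j ∈ T, LinearIndepOn K (column β) ((insert a T).erase j : Finset ℕ) := by
  rcases hpow with ⟨t, ht⟩ | hpow
  · refine Or.inl fun j _ hind => ?_
    have h2 := card_le_two_of_linearIndepOn_column
      (hind.mono (Finset.coe_subset.2 (Finset.erase_subset_erase _ (Finset.subset_insert _ _))))
      fun i hi => ht i (Finset.mem_of_mem_erase hi)
    have := Finset.pred_card_le_card_erase (s := T) (a := j)
    omega
  by_cases hspan : column β a ∈ Submodule.span K (column β '' T)
  · exact Or.inl fun j hj => not_linearIndepOn_erase_insert haT hT hspan hj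
  refine Or.inr fun j hj => linearIndepOn_erase_insert haT hspan hj (by_contra fun hdep => ?_)
  exact hpow j hj (exists_pow_eq_of_not_linearIndepOn_column
    (by rw [Finset.card_erase_of_mem hj, hT4]) hdep)

end DJ

theorem exists_forall_eq_or_forall_not_exists_forall_eq_erase {α : Type*} {f : ℕ → α}
    {a b c d : ℕ} (hab : a ≠ b) (hac : a ≠ c) (had : a ≠ d) (hbc : b ≠ c) (hbd : b ≠ d)
    (hcd : c ≠ d)
    (hnot : ¬ ((f a = f b ∧ f a = f c ∧ f a ≠ f d) ∨ (f a = f b ∧ f a = f d ∧ f a ≠ f c) ∨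
               (f a = f c ∧ f a = f d ∧ f a ≠ f b) ∨ (f b = f c ∧ f b = f d ∧ f b ≠ f a))) :
    (∃ t, ∀ i ∈ ({a, b, c, d} : Finset ℕ), f i = t) ∨
      ∀ j ∈ ({a, b, c, d} : Finset ℕ), ¬ ∃ t, ∀ i ∈ ({a, b, c, d} : Finset ℕ).erase j, f i = t := by
  refine or_iff_not_imp_left.2 fun hconst j hj ⟨t, ht⟩ => ?_
  simp only [Finset.mem_insert, Finset.mem_singleton] at hj
  rcases hj with rfl | rfl | rfl | rfl <;> simp_all [Finset.mem_erase] <;> grind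

open DJ in
theorem DJ_alternative_general (K : Type*) [Field K] [CharZero K]
    (β : K) (i₁ i₂ i₃ i₄ i₅ : ℕ)
    (hcard : ({i₁, i₂, i₃, i₄, i₅} : Finset ℕ).card = 5)
    (h₅ : Polynomial.aeval β (DJ ({i₁, i₂, i₃, i₄, i₅} \ {i₅})) = 0)
    (hnot : ¬ ((β ^ i₁ = β ^ i₂ ∧ β ^ i₁ = β ^ i₃ ∧ β ^ i₁ ≠ β ^ i₄) ∨
               (β ^ i₁ = β ^ i₂ ∧ β ^ i₁ = β ^ i₄ ∧ β ^ i₁ ≠ β ^ i₃) ∨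
               (β ^ i₁ = β ^ i₃ ∧ β ^ i₁ = β ^ i₄ ∧ β ^ i₁ ≠ β ^ i₂) ∨
               (β ^ i₂ = β ^ i₃ ∧ β ^ i₂ = β ^ i₄ ∧ β ^ i₂ ≠ β ^ i₁))) :
    (∀ j ∈ ({i₁, i₂, i₃, i₄, i₅} : Finset ℕ),
        Polynomial.aeval β (DJ ({i₁, i₂, i₃, i₄, i₅} \ {j})) = 0) ∨
    (∀ j ∈ ({i₁, i₂, i₃, i₄} : Finset ℕ),
        Polynomial.aeval β (DJ ({i₁, i₂, i₃, i₄, i₅} \ {j})) ≠ 0) := by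
  have hnd : ([i₁, i₂, i₃, i₄, i₅] : Multiset ℕ).Nodup :=
    Multiset.toFinset_card_eq_card_iff_nodup.1 (by simpa using hcard)
  simp only [Multiset.coe_nodup, List.nodup_cons, List.mem_cons, List.not_mem_nil, or_false,
    not_or] at hnd
  obtain ⟨⟨h₁₂, h₁₃, h₁₄, h₁₅⟩, ⟨h₂₃, h₂₄, h₂₅⟩, ⟨h₃₄, h₃₅⟩, h₄₅, -⟩ := hnd
  set T : Finset ℕ := {i₁, i₂, i₃, i₄}
  have hi₅ : i₅ ∉ T := by simp [T, Ne.symm h₁₅, Ne.symm h₂₅, Ne.symm h₃₅, Ne.symm h₄₅]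
  have hJ : ({i₁, i₂, i₃, i₄, i₅} : Finset ℕ) = insert i₅ T := by
    simp only [T, Finset.insert_comm i₅, Finset.pair_comm i₄ i₅]
  have hT4 : T.card = 4 := by rw [hJ, Finset.card_insert_of_notMem hi₅] at hcard; omega
  have hD (j) (hj : j ∈ insert i₅ T) : aeval β (DJ ((insert i₅ T).erase j)) = 0 ↔
      ¬ LinearIndepOn K (column β) ((insert i₅ T).erase j : Finset ℕ) :=
    aeval_eq_zero_iff β (by rw [Finset.card_erase_of_mem hj, Finset.card_insert_of_notMem hi₅, hT4])
  simp only [hJ, Finset.sdiff_singleton_eq_erase] at h₅ ⊢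
  have hT : ¬ LinearIndepOn K (column β) T := by
    simpa [Finset.erase_insert hi₅] using (hD i₅ (Finset.mem_insert_self _ _)).1 h₅
  rcases forall_not_linearIndepOn_erase_or_forall_linearIndepOn_erase hT4 hi₅ hT
      (exists_forall_eq_or_forall_not_exists_forall_eq_erase (f := (β ^ ·))
        h₁₂ h₁₃ h₁₄ h₂₃ h₂₄ h₃₄ hnot) with hdep | hind
  · exact Or.inl fun j hj => (hD j hj).2 (hdep j hj)
  · exact Or.inr fun j hj => (hD j (Finset.mem_insert_of_mem hj)).not.2 (not_not.2 (hind j hj))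

/-- let `β ≠ 0` in an algebraically closed field of characteristic zero and
`J = {i₁,…,i₅}` five pairwise distinct naturals with `D_{J∖{i₅}}(β) = 0`, such that it is
not the case that exactly three of `β^{i₁},…,β^{i₄}` agree with the fourth different. Then
either all five `D_{J∖{i_j}}(β)` vanish, or none of `D_{J∖{i_j}}(β)`, `1 ≤ j ≤ 4`, vanish. -/
theorem DJ_alternative (K : Type*) [Field K] [IsAlgClosed K] [CharZero K]
    (β : K) (hβ : β ≠ 0) (i₁ i₂ i₃ i₄ i₅ : ℕ)
    (hcard : ({i₁, i₂, i₃, i₄, i₅} : Finset ℕ).card = 5)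
    (h₅ : Polynomial.aeval β (DJ ({i₁, i₂, i₃, i₄, i₅} \ {i₅})) = 0)
    (hnot : ¬ ((β ^ i₁ = β ^ i₂ ∧ β ^ i₁ = β ^ i₃ ∧ β ^ i₁ ≠ β ^ i₄) ∨
               (β ^ i₁ = β ^ i₂ ∧ β ^ i₁ = β ^ i₄ ∧ β ^ i₁ ≠ β ^ i₃) ∨
               (β ^ i₁ = β ^ i₃ ∧ β ^ i₁ = β ^ i₄ ∧ β ^ i₁ ≠ β ^ i₂) ∨
               (β ^ i₂ = β ^ i₃ ∧ β ^ i₂ = β ^ i₄ ∧ β ^ i₂ ≠ β ^ i₁))) :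
    (∀ j ∈ ({i₁, i₂, i₃, i₄, i₅} : Finset ℕ),
        Polynomial.aeval β (DJ ({i₁, i₂, i₃, i₄, i₅} \ {j})) = 0) ∨
    (∀ j ∈ ({i₁, i₂, i₃, i₄} : Finset ℕ),
        Polynomial.aeval β (DJ ({i₁, i₂, i₃, i₄, i₅} \ {j})) ≠ 0) :=
  DJ_alternative_general K β i₁ i₂ i₃ i₄ i₅ hcard h₅ hnot
end

section
/- Let K be an algebraically closed field of characteristic zero, let 0 ≤ i₁ < i₂ < i₃ < i₄ be natural numbers, J = {i₁,i₂,i₃,i₄}, and let β ∈ K with β ≠ 0 be a root of D_J (viewed in K[x]) of multiplicity at least 3. Then β^{i₁} = β^{i₂} = β^{i₃} = β^{i₄}; in particular β^{i₂−i₁} = 1, so β is a root of unity. -/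
/-!
Write `D_J = ∑ₖ cₖ X ^ eₖ`; its six exponents `iⱼ + iₖ` come in three complementary pairs.
A root `β` of multiplicity at least 3 is killed by `(X d/dX) ^ m D_J` for `m = 0, 1, 2`, which
gives three linear relations `∑ₖ cₖ eₖ ^ m β ^ eₖ = 0` between the products `yⱼ yₖ`, where
`yⱼ = β ^ iⱼ`. Weighting by a quadratic in `e` that vanishes on one pair of exponents eliminates
that pair and leaves `(y₁ - y₂)(y₃ - y₄) = 0` and `(y₁ - y₄)(y₂ - y₃) = 0`, so three of the `yⱼ`
coincide; the relation with `m = 1` then forces the fourth to agree with them.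
-/

open Polynomial

theorem Dfour_map_eq_sum (R : Type*) [CommRing R] (a b c d : ℕ) :
    (Dfour a b c d).map (Int.castRingHom R) =
      ∑ k : Fin 6,
        C (![((b : R) - a) * (d - c), ((b : R) - a) * (d - c),
              -(((c : R) - a) * (d - b)), -(((c : R) - a) * (d - b)),
              ((d : R) - a) * (c - b), ((d : R) - a) * (c - b)] k) *
          X ^ (![a + b, c + d, a + c, b + d, a + d, b + c] k) := by
  simp [Dfour, Matrix.det_succ_row_zero, Fin.sum_univ_succ, Fin.succAbove, pow_add]
  ring

theorem X_mul_derivative_C_mul_X_pow {R : Type*} [CommSemiring R] (a : R) (e : ℕ) :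
    X * derivative (C a * X ^ e) = C (a * e) * X ^ e := by
  rcases e with _ | e
  · simp
  · rw [derivative_C_mul_X_pow, Nat.add_sub_cancel, mul_left_comm, ← pow_succ']

-- The sum is `(X d/dX) ^ m` of the polynomial, evaluated at `β`; each application of the Euler
-- operator lowers the order of vanishing at `β` by at most one.
theorem sum_mul_cast_pow_mul_pow_eq_zero_of_pow_dvd {R ι : Type*} [CommRing R] (s : Finset ι)
    (c : ι → R) (e : ι → ℕ) {β : R} {m n : ℕ} (hmn : m < n)
    (h : (X - C β) ^ n ∣ ∑ i ∈ s, C (c i) * X ^ e i) :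
    ∑ i ∈ s, c i * (e i : R) ^ m * β ^ e i = 0 := by
  induction m generalizing c n with
  | zero =>
    have hroot := dvd_iff_isRoot.mp ((dvd_pow_self _ (by omega)).trans h)
    simpa [eval_finsetSum] using hroot
  | succ m ih =>
    have hderiv : (X - C β) ^ (n - 1) ∣ ∑ i ∈ s, C (c i * e i) * X ^ e i := by
      simp_rw [← X_mul_derivative_C_mul_X_pow, ← Finset.mul_sum, ← derivative_sum]
      exact (pow_sub_one_dvd_derivative_of_pow_dvd h).mul_left X
    rw [← ih (fun i => c i * e i) (by omega) hderiv]
    exact Finset.sum_congr rfl fun i _ => by ring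

section Moments

variable {R : Type*} [CommRing R] (n₁ n₂ n₃ n₄ y₁ y₂ y₃ y₄ : R)

/-- With `nⱼ = iⱼ` and `yⱼ = β ^ iⱼ`, this is `∑ₖ cₖ eₖ ^ m β ^ eₖ` for `D_J = ∑ₖ cₖ X ^ eₖ`. -/
def dfourMoment (m : ℕ) : R :=
  (n₂ - n₁) * (n₄ - n₃) * ((n₁ + n₂) ^ m * y₁ * y₂ + (n₃ + n₄) ^ m * y₃ * y₄)
    - (n₃ - n₁) * (n₄ - n₂) * ((n₁ + n₃) ^ m * y₁ * y₃ + (n₂ + n₄) ^ m * y₂ * y₄)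
    + (n₄ - n₁) * (n₃ - n₂) * ((n₁ + n₄) ^ m * y₁ * y₄ + (n₂ + n₃) ^ m * y₂ * y₃)

/- The combinations below weight the exponent `e` by `(e - e') * (e - e'')`, where `{e', e''}` is
one of the three pairs of exponents, so that pair drops out. -/
theorem dfourMoment_eliminate_first_pair :
    dfourMoment n₁ n₂ n₃ n₄ y₁ y₂ y₃ y₄ 2
        - (n₁ + n₂ + n₃ + n₄) * dfourMoment n₁ n₂ n₃ n₄ y₁ y₂ y₃ y₄ 1
        + (n₁ + n₂) * (n₃ + n₄) * dfourMoment n₁ n₂ n₃ n₄ y₁ y₂ y₃ y₄ 0 =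
      (n₃ - n₁) * (n₄ - n₂) * ((n₄ - n₁) * (n₃ - n₂)) * ((y₁ - y₂) * (y₃ - y₄)) := by
  unfold dfourMoment; ring

theorem dfourMoment_eliminate_third_pair :
    dfourMoment n₁ n₂ n₃ n₄ y₁ y₂ y₃ y₄ 2
        - (n₁ + n₂ + n₃ + n₄) * dfourMoment n₁ n₂ n₃ n₄ y₁ y₂ y₃ y₄ 1
        + (n₁ + n₄) * (n₂ + n₃) * dfourMoment n₁ n₂ n₃ n₄ y₁ y₂ y₃ y₄ 0 =
      (n₂ - n₁) * (n₄ - n₃) * ((n₃ - n₁) * (n₄ - n₂)) * ((y₁ - y₄) * (y₂ - y₃)) := by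
  unfold dfourMoment; ring

variable {n₁ n₂ n₃ n₄ y₁ y₂ y₃ y₄} [IsDomain R]

theorem eq_of_dfourMoment_eq_zero (h₁₂ : n₁ ≠ n₂) (h₁₃ : n₁ ≠ n₃) (h₁₄ : n₁ ≠ n₄)
    (h₂₃ : n₂ ≠ n₃) (h₂₄ : n₂ ≠ n₄) (h₃₄ : n₃ ≠ n₄) (hy₁ : y₁ ≠ 0) (hy₄ : y₄ ≠ 0)
    (hM : ∀ m < 3, dfourMoment n₁ n₂ n₃ n₄ y₁ y₂ y₃ y₄ m = 0) :
    y₁ = y₂ ∧ y₂ = y₃ ∧ y₃ = y₄ := by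
  have hM₀ := hM 0 (by norm_num)
  have hM₁ := hM 1 (by norm_num)
  have hM₂ := hM 2 (by norm_num)
  have hsplit₁ : y₁ = y₂ ∨ y₃ = y₄ := by
    have h := dfourMoment_eliminate_first_pair n₁ n₂ n₃ n₄ y₁ y₂ y₃ y₄
    simpa [hM₀, hM₁, hM₂, sub_eq_zero, h₁₃.symm, h₁₄.symm, h₂₃.symm, h₂₄.symm] using h.symm
  have hsplit₂ : y₁ = y₄ ∨ y₂ = y₃ := by
    have h := dfourMoment_eliminate_third_pair n₁ n₂ n₃ n₄ y₁ y₂ y₃ y₄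
    simpa [hM₀, hM₁, hM₂, sub_eq_zero, h₁₂.symm, h₁₃.symm, h₂₄.symm, h₃₄.symm] using h.symm
  unfold dfourMoment at hM₁
  rcases hsplit₁ with h₁ | h₁ <;> rcases hsplit₂ with h₂ | h₂ <;> subst h₁ <;> subst h₂
  · have h : (n₂ - n₁) * (n₄ - n₁) * (n₄ - n₂) * (y₁ * (y₃ - y₁)) = 0 := by
      linear_combination hM₁
    simp_all [sub_eq_zero, eq_comm]
  · have h : (n₂ - n₁) * (n₃ - n₁) * (n₃ - n₂) * (y₁ * (y₁ - y₄)) = 0 := by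
      linear_combination hM₁
    simp_all [sub_eq_zero, eq_comm]
  · have h : (n₃ - n₁) * (n₄ - n₁) * (n₄ - n₃) * (y₁ * (y₁ - y₂)) = 0 := by
      linear_combination hM₁
    simp_all [sub_eq_zero, eq_comm]
  · have h : (n₃ - n₂) * (n₄ - n₂) * (n₄ - n₃) * (y₂ * (y₁ - y₂)) = 0 := by
      linear_combination hM₁
    simp_all [sub_eq_zero, eq_comm]

end Moments

theorem Dfour_triple_root_general (K : Type*) [Field K] [CharZero K]
    (i₁ i₂ i₃ i₄ : ℕ) (h₁₂ : i₁ < i₂) (h₂₃ : i₂ < i₃) (h₃₄ : i₃ < i₄)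
    (β : K) (hβ : β ≠ 0)
    (hmult : 3 ≤ ((Dfour i₁ i₂ i₃ i₄).map (Int.castRingHom K)).rootMultiplicity β) :
    β ^ i₁ = β ^ i₂ ∧ β ^ i₂ = β ^ i₃ ∧ β ^ i₃ = β ^ i₄ ∧ β ^ (i₂ - i₁) = 1 := by
  have hdvd := (pow_dvd_pow (X - C β) hmult).trans (pow_rootMultiplicity_dvd _ β)
  rw [Dfour_map_eq_sum] at hdvd
  have hM : ∀ m < 3,
      dfourMoment (i₁ : K) i₂ i₃ i₄ (β ^ i₁) (β ^ i₂) (β ^ i₃) (β ^ i₄) m = 0 := by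
    intro m hm
    rw [← sum_mul_cast_pow_mul_pow_eq_zero_of_pow_dvd _ _ _ hm hdvd]
    simp [dfourMoment, Fin.sum_univ_six, pow_add]
    ring
  have hne {i j : ℕ} (h : i < j) : (i : K) ≠ j := Nat.cast_injective.ne h.ne
  obtain ⟨e₁₂, e₂₃, e₃₄⟩ := eq_of_dfourMoment_eq_zero (hne h₁₂) (hne (h₁₂.trans h₂₃))
    (hne (h₁₂.trans (h₂₃.trans h₃₄))) (hne h₂₃) (hne (h₂₃.trans h₃₄)) (hne h₃₄)
    (pow_ne_zero _ hβ) (pow_ne_zero _ hβ) hM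
  refine ⟨e₁₂, e₂₃, e₃₄, ?_⟩
  rw [pow_sub₀ β hβ h₁₂.le, ← e₁₂, mul_inv_cancel₀ (pow_ne_zero _ hβ)]

/-- if `β ≠ 0` is a root of `D_J` (viewed in `K[x]`) of multiplicity at
least 3, then `β^{i₁} = β^{i₂} = β^{i₃} = β^{i₄}`; in particular `β^{i₂−i₁} = 1`,
so `β` is a root of unity. -/
theorem Dfour_triple_root (K : Type*) [Field K] [IsAlgClosed K] [CharZero K]
    (i₁ i₂ i₃ i₄ : ℕ) (h₁₂ : i₁ < i₂) (h₂₃ : i₂ < i₃) (h₃₄ : i₃ < i₄)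
    (β : K) (hβ : β ≠ 0)
    (hmult : 3 ≤ ((Dfour i₁ i₂ i₃ i₄).map (Int.castRingHom K)).rootMultiplicity β) :
    β ^ i₁ = β ^ i₂ ∧ β ^ i₂ = β ^ i₃ ∧ β ^ i₃ = β ^ i₄ ∧ β ^ (i₂ - i₁) = 1 :=
  Dfour_triple_root_general K i₁ i₂ i₃ i₄ h₁₂ h₂₃ h₃₄ β hβ hmult
end

section
/- Let K be an algebraically closed field of characteristic zero, let n ∈ ℕ, let 0 ≤ i₁ < i₂ < i₃ < i₄ ≤ n, J = {i₁,i₂,i₃,i₄}, and let β ∈ K with β ≠ 0 and β ≠ 1 be a root of D_J such that each value among β^{i₁}, β^{i₂}, β^{i₃}, β^{i₄} occurs at most twice. Then there exists i₅ ∈ {0,…,n} with i₅ ∉ J such that D_{(J∪{i₅})∖{i_j}}(β) ≠ 0 for all j ∈ {1,2,3,4}. -/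
open Polynomial

def Mmat {K : Type*} [Field K] (β : K) (a b c d : ℕ) : Matrix (Fin 4) (Fin 4) K :=
  Matrix.of fun r (j : Fin 4) =>
    ![(1 : K), ((![a,b,c,d] j : ℕ) : K), β ^ (![a,b,c,d] j),
      ((![a,b,c,d] j : ℕ) : K) * β ^ (![a,b,c,d] j)] r

def gf {K : Type*} [Field K] (β : K) (v : Fin 4 → K) (e : ℕ) : K :=
  v 0 + v 1 * (e : K) + v 2 * β ^ e + v 3 * ((e : K) * β ^ e)

lemma aeval_Dfour {K : Type*} [Field K] (β : K) (a b c d : ℕ) :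
    aeval β (Dfour a b c d) = (Mmat β a b c d).det := by
  rw [Dfour, AlgHom.map_det]
  congr 1
  ext r j
  fin_cases r <;> fin_cases j <;> simp [Mmat, map_natCast]

lemma det_zero_rel {K : Type*} [Field K] (β : K) (a b c d : ℕ)
    (h : (Mmat β a b c d).det = 0) :
    ∃ v : Fin 4 → K, v ≠ 0 ∧ gf β v a = 0 ∧ gf β v b = 0 ∧ gf β v c = 0 ∧ gf β v d = 0 := by
  obtain ⟨v, hv, hvm⟩ := (Matrix.exists_vecMul_eq_zero_iff).mpr h
  have h0 := congrFun hvm 0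
  have h1 := congrFun hvm 1
  have h2 := congrFun hvm 2
  have h3 := congrFun hvm 3
  simp [Matrix.vecMul, dotProduct, Fin.sum_univ_four, Mmat, gf] at h0 h1 h2 h3 ⊢
  exact ⟨v, hv, by linear_combination h0, by linear_combination h1, by linear_combination h2,
    by linear_combination h3⟩

lemma unique_rel {K : Type*} [Field K] (β : K) (a b c : ℕ)
    (hab : (a : K) ≠ b) (hac : (a : K) ≠ c) (hbc : (b : K) ≠ c)
    (hnd : ¬ (β ^ a = β ^ b ∧ β ^ a = β ^ c))
    (u w : Fin 4 → K) (hu : u ≠ 0)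
    (hua : gf β u a = 0) (hub : gf β u b = 0) (huc : gf β u c = 0)
    (hwa : gf β w a = 0) (hwb : gf β w b = 0) (hwc : gf β w c = 0) :
    ∃ t : K, w = t • u := by
  simp only [gf] at hua hub huc hwa hwb hwc
  set A := (a : K) with hA
  set B := (b : K) with hB
  set C := (c : K) with hC
  set x := β ^ a with hx
  set y := β ^ b with hy
  set z := β ^ c with hz
  have hBA : B - A ≠ 0 := sub_ne_zero.mpr (Ne.symm hab)
  have hCA : C - A ≠ 0 := sub_ne_zero.mpr (Ne.symm hac)
  have hCB : C - B ≠ 0 := sub_ne_zero.mpr (Ne.symm hbc)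
  set α := (y - x) * (C - A) - (z - x) * (B - A) with hα
  set γ := (B * y - A * x) * (C - A) - (C * z - A * x) * (B - A) with hγ
  have Ru : α * u 2 + γ * u 3 = 0 := by
    linear_combination (C - A) * hub + (B - C) * hua - (B - A) * huc
  have Rw : α * w 2 + γ * w 3 = 0 := by
    linear_combination (C - A) * hwb + (B - C) * hwa - (B - A) * hwc
  have hαγ : α ≠ 0 ∨ γ ≠ 0 := by
    by_contra hcon
    push_neg at hcon
    obtain ⟨h1, h2⟩ := hcon
    have hyz : y = z := by
      have h3 : (B - A) * (C - A) * (y - z) = 0 := by linear_combination h2 - A * h1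
      have h4 := (mul_eq_zero.mp h3).resolve_left (mul_ne_zero hBA hCA)
      exact sub_eq_zero.mp h4
    have hxy : x = y := by
      have h3 : (y - x) * (C - B) = 0 := by linear_combination h1 - (B - A) * hyz
      have h4 := (mul_eq_zero.mp h3).resolve_right hCB
      exact (sub_eq_zero.mp h4).symm
    exact hnd ⟨hxy, hxy.trans hyz⟩
  have m23 : u 2 * w 3 - u 3 * w 2 = 0 := by
    rcases hαγ with h | h
    · have h5 : α * (u 2 * w 3 - u 3 * w 2) = 0 := by linear_combination w 3 * Ru - u 3 * Rw
      exact (mul_eq_zero.mp h5).resolve_left h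
    · have h5 : γ * (u 2 * w 3 - u 3 * w 2) = 0 := by linear_combination u 2 * Rw - w 2 * Ru
      exact (mul_eq_zero.mp h5).resolve_left h
  have m13 : u 3 * w 1 - u 1 * w 3 = 0 := by
    have h3 : (B - A) * (u 3 * w 1 - u 1 * w 3) = 0 := by
      linear_combination u 3 * hwb - u 3 * hwa - w 3 * hub + w 3 * hua + (y - x) * m23
    exact (mul_eq_zero.mp h3).resolve_left hBA
  have m12 : u 2 * w 1 - u 1 * w 2 = 0 := by
    have h3 : (B - A) * (u 2 * w 1 - u 1 * w 2) = 0 := by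
      linear_combination u 2 * hwb - u 2 * hwa - w 2 * hub + w 2 * hua - (B * y - A * x) * m23
    exact (mul_eq_zero.mp h3).resolve_left hBA
  have m03 : u 3 * w 0 - u 0 * w 3 = 0 := by
    linear_combination u 3 * hwa - w 3 * hua - A * m13 + x * m23
  have m02 : u 2 * w 0 - u 0 * w 2 = 0 := by
    linear_combination u 2 * hwa - w 2 * hua - A * m12 - A * x * m23
  rcases eq_or_ne (u 3) 0 with h3 | h3
  · rcases eq_or_ne (u 2) 0 with h2 | h2
    · exfalso
      have hu1 : u 1 = 0 := by
        have h5 : (B - A) * u 1 = 0 := by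
          linear_combination hub - hua - (y - x) * h2 - (B * y - A * x) * h3
        exact (mul_eq_zero.mp h5).resolve_left hBA
      have hu0 : u 0 = 0 := by linear_combination hua - A * hu1 - x * h2 - A * x * h3
      exact hu (funext fun i => by fin_cases i <;> assumption)
    · refine ⟨w 2 / u 2, ?_⟩
      have e0 : w 0 = w 2 / u 2 * u 0 := by field_simp; linear_combination m02
      have e1 : w 1 = w 2 / u 2 * u 1 := by field_simp; linear_combination m12
      have e2 : w 2 = w 2 / u 2 * u 2 := by field_simp
      have e3 : w 3 = w 2 / u 2 * u 3 := by field_simp; linear_combination m23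
      funext i
      fin_cases i
      · exact e0
      · exact e1
      · exact e2
      · exact e3
  · refine ⟨w 3 / u 3, ?_⟩
    have e0 : w 0 = w 3 / u 3 * u 0 := by field_simp; linear_combination m03
    have e1 : w 1 = w 3 / u 3 * u 1 := by field_simp; linear_combination m13
    have e2 : w 2 = w 3 / u 3 * u 2 := by field_simp; linear_combination -m23
    have e3 : w 3 = w 3 / u 3 * u 3 := by field_simp
    funext i
    fin_cases i
    · exact e0
    · exact e1
    · exact e2
    · exact e3

lemma rel_zero {K : Type*} [Field K] [CharZero K] (β : K) (hβ0 : β ≠ 0) (hβ1 : β ≠ 1) (u : Fin 4 → K)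
    (g0 : gf β u 0 = 0) (g1 : gf β u 1 = 0) (g2 : gf β u 2 = 0) (g3 : gf β u 3 = 0) :
    u = 0 := by
  simp only [gf] at g0 g1 g2 g3
  norm_num at g0 g1 g2 g3
  have h1β : (1 : K) - β ≠ 0 := sub_ne_zero.mpr (Ne.symm hβ1)
  have E0 : (u 0 + u 1) * u 2 = β * u 0 * (u 2 + u 3) := by
    linear_combination (u 2) * g1 - β * (u 2 + u 3) * g0
  have E1 : (u 0 + 2 * u 1) * (u 2 + u 3) = β * (u 0 + u 1) * (u 2 + 2 * u 3) := by
    linear_combination (u 2 + u 3) * g2 - β * (u 2 + 2 * u 3) * g1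
  have E2 : (u 0 + 3 * u 1) * (u 2 + 2 * u 3) = β * (u 0 + 2 * u 1) * (u 2 + 3 * u 3) := by
    linear_combination (u 2 + 2 * u 3) * g3 - β * (u 2 + 3 * u 3) * g2
  have hBD : u 1 * u 3 = 0 := by
    have h : u 1 * u 3 * (1 - β) * 2 = 0 := by linear_combination E0 - 2 * E1 + E2
    have h' := (mul_eq_zero.mp h).resolve_right (two_ne_zero)
    exact (mul_eq_zero.mp h').resolve_right h1β
  have hq : u 0 * u 3 + u 1 * u 2 + u 1 * u 3 = 0 := by
    have h : (u 0 * u 3 + u 1 * u 2 + u 1 * u 3) * (1 - β) * 2 = 0 := by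
      linear_combination 4 * E1 - 3 * E0 - E2
    have h' := (mul_eq_zero.mp h).resolve_right (two_ne_zero)
    exact (mul_eq_zero.mp h').resolve_right h1β
  have base : u 1 = 0 → u 3 = 0 → u = 0 := by
    intro hB hD
    have hC : u 2 * (1 - β) = 0 := by linear_combination g0 - g1 + hB + β * hD
    have hC0 : u 2 = 0 := (mul_eq_zero.mp hC).resolve_right h1β
    have hA : u 0 = 0 := by linear_combination g0 - hC0
    funext i; fin_cases i
    · exact hA
    · exact hB
    · exact hC0
    · exact hD
  rcases mul_eq_zero.mp hBD with hB | hD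
  · have hAD : u 0 * u 3 = 0 := by linear_combination hq - u 2 * hB - u 3 * hB
    rcases mul_eq_zero.mp hAD with hA | hD
    · have hC : u 2 = 0 := by linear_combination g0 - hA
      have hD : u 3 = 0 := by
        have h : u 3 * β = 0 := by linear_combination g1 - hA - hB - β * hC
        exact (mul_eq_zero.mp h).resolve_right hβ0
      exact base hB hD
    · exact base hB hD
  · have hBC : u 1 * u 2 = 0 := by linear_combination hq - u 0 * hD - u 1 * hD
    rcases mul_eq_zero.mp hBC with hB | hC
    · exact base hB hD
    · have hA : u 0 = 0 := by linear_combination g0 - hC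
      have hB : u 1 = 0 := by linear_combination g1 - hA - β * hC - β * hD
      exact base hB hD

lemma sort4 (S : Finset ℕ) (h : S.card = 4) :
    ∃ a b c d : ℕ, S.sort (· ≤ ·) = [a, b, c, d] := by
  have hl : (S.sort (· ≤ ·)).length = 4 := (Finset.length_sort _).trans h
  generalize hso : S.sort (· ≤ ·) = l
  rw [hso] at hl
  rcases l with _ | ⟨a, _ | ⟨b, _ | ⟨c, _ | ⟨d, _ | ⟨e, l⟩⟩⟩⟩⟩ <;>
    first
      | exact ⟨a, b, c, d, rfl⟩
      | (exfalso; simp at hl)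
      | (exfalso; simp at hl; omega)

/-- let `0 ≤ i₁ < i₂ < i₃ < i₄ ≤ n`, `J = {i₁,i₂,i₃,i₄}`, and let
`β ∉ {0,1}` be a root of `D_J` such that each value among `β^{i₁},…,β^{i₄}` occurs at
most twice. Then there is `i₅ ∈ {0,…,n} ∖ J` with `D_{(J∪{i₅})∖{i_j}}(β) ≠ 0` for all `j`. -/
theorem DJ_good_second_monomial (K : Type*) [Field K] [IsAlgClosed K] [CharZero K]
    (n i₁ i₂ i₃ i₄ : ℕ) (h₁₂ : i₁ < i₂) (h₂₃ : i₂ < i₃) (h₃₄ : i₃ < i₄) (h₄n : i₄ ≤ n)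
    (β : K) (hβ0 : β ≠ 0) (hβ1 : β ≠ 1)
    (hroot : Polynomial.aeval β (Dfour i₁ i₂ i₃ i₄) = 0)
    (hmost : ∀ j k l : ℕ, j ∈ ({i₁, i₂, i₃, i₄} : Finset ℕ) →
        k ∈ ({i₁, i₂, i₃, i₄} : Finset ℕ) → l ∈ ({i₁, i₂, i₃, i₄} : Finset ℕ) →
        j ≠ k → j ≠ l → k ≠ l → ¬ (β ^ j = β ^ k ∧ β ^ j = β ^ l)) :
    ∃ i₅ : ℕ, i₅ ≤ n ∧ i₅ ∉ ({i₁, i₂, i₃, i₄} : Finset ℕ) ∧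
      ∀ j ∈ ({i₁, i₂, i₃, i₄} : Finset ℕ),
        Polynomial.aeval β (DJ (insert i₅ ({i₁, i₂, i₃, i₄} : Finset ℕ) \ {j})) ≠ 0 := by
  classical
  set J : Finset ℕ := {i₁, i₂, i₃, i₄} with hJ
  have castne : ∀ {p q : ℕ}, p ≠ q → (p : K) ≠ (q : K) := fun h => by exact_mod_cast h
  have hJcard : J.card = 4 := by
    rw [hJ]
    rw [Finset.card_insert_of_notMem (by simp; omega),
      Finset.card_insert_of_notMem (by simp; omega),
      Finset.card_insert_of_notMem (by simp; omega), Finset.card_singleton]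
  have hdet : (Mmat β i₁ i₂ i₃ i₄).det = 0 := by rw [← aeval_Dfour]; exact hroot
  obtain ⟨u, hu, gu1, gu2, gu3, gu4⟩ := det_zero_rel β i₁ i₂ i₃ i₄ hdet
  have guJ : ∀ m ∈ J, gf β u m = 0 := by
    intro m hm
    rw [hJ] at hm
    simp only [Finset.mem_insert, Finset.mem_singleton] at hm
    rcases hm with rfl | rfl | rfl | rfl <;> assumption
  have hC : ∀ i₅, i₅ ∉ J → ∀ j ∈ J,
      Polynomial.aeval β (DJ (insert i₅ J \ {j})) = 0 → gf β u i₅ = 0 := by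
    intro i₅ h5 j hj hzero
    set S := insert i₅ J \ {j} with hS
    have hSerase : S = (insert i₅ J).erase j := by rw [hS, Finset.erase_eq]
    have hScard : S.card = 4 := by
      rw [hSerase, Finset.card_erase_of_mem (Finset.mem_insert_of_mem hj),
        Finset.card_insert_of_notMem h5, hJcard]
    obtain ⟨a, b, c, d, hsort⟩ := sort4 S hScard
    have hDJ : DJ S = Dfour a b c d := by unfold DJ; rw [hsort]
    have hdet2 : (Mmat β a b c d).det = 0 := by rw [← aeval_Dfour, ← hDJ]; exact hzero
    obtain ⟨w, hw, gwa, gwb, gwc, gwd⟩ := det_zero_rel β a b c d hdet2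
    have hmem : ∀ s ∈ S, gf β w s = 0 := by
      intro s hs
      have hs' : s ∈ S.sort (· ≤ ·) := (Finset.mem_sort _).mpr hs
      rw [hsort] at hs'
      simp only [List.mem_cons, List.not_mem_nil, or_false] at hs'
      rcases hs' with rfl | rfl | rfl | rfl <;> assumption
    have h5S : i₅ ∈ S := by
      rw [hS, Finset.mem_sdiff, Finset.mem_singleton]
      exact ⟨Finset.mem_insert_self _ _, fun h => h5 (h ▸ hj)⟩
    have gwi5 : gf β w i₅ = 0 := hmem i₅ h5S
    have key : ∀ p q r : ℕ, p ∈ J → q ∈ J → r ∈ J → p ≠ q → p ≠ r → q ≠ r →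
        p ≠ j → q ≠ j → r ≠ j → gf β u i₅ = 0 := by
      intro p q r hp hq hr hpq hpr hqr hpj hqj hrj
      have hmemS : ∀ s : ℕ, s ∈ J → s ≠ j → s ∈ S := by
        intro s hsJ hsj
        rw [hS, Finset.mem_sdiff, Finset.mem_singleton]
        exact ⟨Finset.mem_insert_of_mem hsJ, hsj⟩
      have hnd := hmost p q r hp hq hr hpq hpr hqr
      obtain ⟨t, hts⟩ := unique_rel β p q r (castne hpq) (castne hpr) (castne hqr) hnd u w hu
        (guJ p hp) (guJ q hq) (guJ r hr)
        (hmem p (hmemS p hp hpj)) (hmem q (hmemS q hq hqj)) (hmem r (hmemS r hr hrj))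
      have ht0 : t ≠ 0 := by
        rintro rfl
        rw [zero_smul] at hts
        exact hw hts
      have hwt : gf β w i₅ = t * gf β u i₅ := by
        rw [hts]; simp only [gf, Pi.smul_apply, smul_eq_mul]; ring
      rw [gwi5] at hwt
      exact ((mul_eq_zero.mp hwt.symm).resolve_left ht0)
    have hj4 : j = i₁ ∨ j = i₂ ∨ j = i₃ ∨ j = i₄ := by
      rw [hJ] at hj
      simpa using hj
    have m1 : i₁ ∈ J := by rw [hJ]; simp
    have m2 : i₂ ∈ J := by rw [hJ]; simp
    have m3 : i₃ ∈ J := by rw [hJ]; simp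
    have m4 : i₄ ∈ J := by rw [hJ]; simp
    rcases hj4 with rfl | rfl | rfl | rfl
    · exact key i₂ i₃ i₄ m2 m3 m4 (by omega) (by omega) (by omega) (by omega) (by omega) (by omega)
    · exact key i₁ i₃ i₄ m1 m3 m4 (by omega) (by omega) (by omega) (by omega) (by omega) (by omega)
    · exact key i₁ i₂ i₄ m1 m2 m4 (by omega) (by omega) (by omega) (by omega) (by omega) (by omega)
    · exact key i₁ i₂ i₃ m1 m2 m3 (by omega) (by omega) (by omega) (by omega) (by omega) (by omega)
  by_contra hcon
  push_neg at hcon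
  have hall : ∀ m, m ≤ n → gf β u m = 0 := by
    intro m hm
    by_cases hmJ : m ∈ J
    · exact guJ m hmJ
    · obtain ⟨j, hj, hz⟩ := hcon m hm hmJ
      exact hC m hmJ j hj hz
  exact hu (rel_zero β hβ0 hβ1 u (hall 0 (by omega)) (hall 1 (by omega))
    (hall 2 (by omega)) (hall 3 (by omega)))
end
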